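/- arXiv:2009.09141 — 11 statements merged into one kernel-verified Lean document; each statement's English description precedes it below -/
import Mathlib

section
/- Let (S, μ) be a measure space, D ⊆ S a measurable set, and K : S × S → ℂ a kernel such that for every k ≥ 1 and all points x_1, …, x_k ∈ S the matrix (K(x_i, x_j))_{1 ≤ i, j ≤ k} is Hermitian positive semidefinite (so in particular K(x,x) is real and nonnegative and all these determinants are real and nonnegative). Assume x ↦ K(x,x) is integrable on D. Then for every k ≥ 1, ∫_{D^k} det((K(x_i, x_j))_{1 ≤ i,j ≤ k}) dμ^{⊗k}(x_1, …, x_k) ≤ (∫_D K(x,x) dμ(x))^k. -/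
open MeasureTheory ComplexOrder

/-!
Pointwise, Hadamard's inequality bounds `det (K (xᵢ, xⱼ))` by `∏ᵢ K (xᵢ, xᵢ)`, whose integral over
`Dᵏ` factors as `(∫_D K (x, x))ᵏ`. For Hadamard's inequality, conjugating by the diagonal matrix
`diag (K (xᵢ, xᵢ))^{-1/2}` reduces to unit diagonal; then the eigenvalues are nonnegative with sum
the dimension `k`, so their product is at most `1` by AM-GM. A zero diagonal entry of a positive
semidefinite matrix forces its column to vanish, so the determinant is `0`.
-/

theorem Real.prod_le_one_of_sum_eq_card {ι : Type*} [Fintype ι] {z : ι → ℝ}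
    (hz : ∀ i, 0 ≤ z i) (hsum : ∑ i, z i = Fintype.card ι) : ∏ i, z i ≤ 1 :=
  calc ∏ i, z i ≤ ∏ i, Real.exp (z i - 1) :=
        Finset.prod_le_prod (fun i _ ↦ hz i) fun i _ ↦ by
          linarith [Real.add_one_le_exp (z i - 1)]
    _ = 1 := by rw [← Real.exp_sum, Finset.sum_sub_distrib, hsum]; simp

namespace Matrix.PosSemidef

open RCLike

theorem re_diag_nonneg {𝕜 n : Type*} [RCLike 𝕜] {M : Matrix n n 𝕜} (hM : M.PosSemidef)
    (i : n) : 0 ≤ re (M i i) :=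
  (RCLike.nonneg_iff.mp hM.diag_nonneg).1

variable {𝕜 n : Type*} [RCLike 𝕜] [Fintype n] [DecidableEq n] {M : Matrix n n 𝕜}

theorem re_det_le_one_of_diag_eq_one (hM : M.PosSemidef) (hdiag : ∀ i, M i i = 1) :
    re M.det ≤ 1 := by
  have htrace : ∑ i, hM.1.eigenvalues i = Fintype.card n := by
    have := hM.1.trace_eq_sum_eigenvalues
    simp only [trace, diag_apply, hdiag, Finset.sum_const, Finset.card_univ, nsmul_eq_mul,
      mul_one] at this
    exact_mod_cast this.symm
  rw [hM.1.det_eq_prod_eigenvalues, ← ofReal_prod, ofReal_re]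
  exact Real.prod_le_one_of_sum_eq_card hM.eigenvalues_nonneg htrace

theorem re_det_le_prod_re_diag_of_pos (hM : M.PosSemidef) (hpos : ∀ i, 0 < re (M i i)) :
    re M.det ≤ ∏ i, re (M i i) := by
  set c : n → ℝ := fun i ↦ (√(re (M i i)))⁻¹
  set C : Matrix n n 𝕜 := diagonal fun i ↦ (c i : 𝕜)
  have hCH : Cᴴ = C := by simp [C, diagonal_conjTranspose]
  have hc_sq : ∀ i, c i ^ 2 = (re (M i i))⁻¹ := fun i ↦ by
    simp [c, inv_pow, Real.sq_sqrt (hpos i).le]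
  have hN : (C * M * C).PosSemidef := by simpa [hCH] using hM.mul_mul_conjTranspose_same C
  have hN_diag : ∀ i, (C * M * C) i i = 1 := fun i ↦ by
    rw [mul_diagonal, diagonal_mul, ← hM.1.coe_re_apply_self i, ← ofReal_mul, ← ofReal_mul,
      mul_right_comm, ← sq, hc_sq, inv_mul_cancel₀ (hpos i).ne', ofReal_one]
  have hN_det : re (C * M * C).det = (∏ i, re (M i i))⁻¹ * re M.det := by
    rw [det_mul, det_mul, det_diagonal, ← Finset.prod_inv_distrib,
      ← Finset.prod_congr rfl fun i _ ↦ hc_sq i, Finset.prod_pow, ← ofReal_prod, sq,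
      mul_comm, ← mul_assoc, ← ofReal_mul, re_ofReal_mul]
  have hprod_pos : 0 < ∏ i, re (M i i) := Finset.prod_pos fun i _ ↦ hpos i
  have := hN_det ▸ hN.re_det_le_one_of_diag_eq_one hN_diag
  rwa [inv_mul_le_iff₀ hprod_pos, mul_one] at this

theorem det_eq_zero_of_diag_eq_zero (hM : M.PosSemidef) {i : n} (hi : M i i = 0) : M.det = 0 := by
  have hcol : M *ᵥ Pi.single i 1 = 0 :=
    (hM.dotProduct_mulVec_zero_iff _).mp <| by
      simpa [mulVec_single, dotProduct, Pi.single_apply] using hi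
  exact det_eq_zero_of_column_eq_zero i fun j ↦ by simpa [mulVec_single] using congrFun hcol j

theorem re_det_le_prod_re_diag (hM : M.PosSemidef) : re M.det ≤ ∏ i, re (M i i) := by
  by_cases hpos : ∀ i, 0 < re (M i i)
  · exact hM.re_det_le_prod_re_diag_of_pos hpos
  · obtain ⟨i, hi⟩ := not_forall.mp hpos
    have hMii : M i i = 0 := by
      rw [← hM.1.coe_re_apply_self i, le_antisymm (not_lt.mp hi) (hM.re_diag_nonneg i),
        ofReal_zero]
    rw [hM.det_eq_zero_of_diag_eq_zero hMii, map_zero]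
    exact Finset.prod_nonneg fun j _ ↦ hM.re_diag_nonneg j

end Matrix.PosSemidef

theorem MeasureTheory.integral_re_det_kernel_le_pow {𝕜 S ι : Type*} [RCLike 𝕜]
    [MeasurableSpace S] [Fintype ι] [DecidableEq ι] (μ : Measure S) [SigmaFinite μ] (K : S → S → 𝕜)
    (hpsd : ∀ x : ι → S, (Matrix.of fun i j ↦ K (x i) (x j)).PosSemidef)
    (hint : Integrable (fun x ↦ RCLike.re (K x x)) μ) :
    ∫ x, RCLike.re (Matrix.of fun i j ↦ K (x i) (x j)).det ∂(Measure.pi fun _ : ι ↦ μ)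
      ≤ (∫ x, RCLike.re (K x x) ∂μ) ^ Fintype.card ι :=
  calc _ ≤ ∫ x, ∏ i, RCLike.re (K (x i) (x i)) ∂(Measure.pi fun _ : ι ↦ μ) :=
        integral_mono_of_nonneg (.of_forall fun x ↦ RCLike.nonneg_iff.mp (hpsd x).det_nonneg |>.1)
          (.fintype_prod fun _ ↦ hint) (.of_forall fun x ↦ (hpsd x).re_det_le_prod_re_diag)
    _ = _ := integral_fintype_prod_eq_pow fun x ↦ RCLike.re (K x x)

theorem stmt_0_general {S : Type*} [MeasurableSpace S] (μ : Measure S) [SigmaFinite μ]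
    (D : Set S) (K : S → S → ℂ)
    (hpsd : ∀ (k : ℕ), 1 ≤ k → ∀ x : Fin k → S,
      (Matrix.of fun i j => K (x i) (x j)).PosSemidef)
    (hint : IntegrableOn (fun x => (K x x).re) D μ) :
    ∀ (k : ℕ), 1 ≤ k →
      (∫ x in Set.univ.pi (fun _ : Fin k => D),
          (Matrix.det (Matrix.of fun i j => K (x i) (x j))).re
          ∂(Measure.pi fun _ : Fin k => μ))
        ≤ (∫ x in D, (K x x).re ∂μ) ^ k := by
  intro k hk
  rw [Measure.restrict_pi_pi]
  simpa using integral_re_det_kernel_le_pow (μ.restrict D) K (hpsd k hk) hint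

theorem stmt_0 {S : Type*} [MeasurableSpace S] (μ : Measure S) [SigmaFinite μ]
    (D : Set S) (hD : MeasurableSet D) (K : S → S → ℂ)
    (hpsd : ∀ (k : ℕ), 1 ≤ k → ∀ x : Fin k → S,
      (Matrix.of fun i j => K (x i) (x j)).PosSemidef)
    (hint : IntegrableOn (fun x => (K x x).re) D μ) :
    ∀ (k : ℕ), 1 ≤ k →
      (∫ x in Set.univ.pi (fun _ : Fin k => D),
          (Matrix.det (Matrix.of fun i j => K (x i) (x j))).re
          ∂(Measure.pi fun _ : Fin k => μ))
        ≤ (∫ x in D, (K x x).re ∂μ) ^ k :=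
  stmt_0_general μ D K hpsd hint
end

section
/- Let (S, μ) be a measure space and let φ_1, …, φ_n : S → ℂ be measurable functions that are orthonormal, i.e. ∫_S φ_i(x) · conj(φ_j(x)) dμ(x) = δ_{ij} for all 1 ≤ i, j ≤ n. Define the kernel K(x,y) = Σ_{i=1}^n φ_i(x) · conj(φ_i(y)). Then ∫_{S^n} det((K(x_i, x_j))_{1 ≤ i,j ≤ n}) dμ^{⊗n}(x_1, …, x_n) = n!. -/
/-!
Writing `A(x)` for the matrix `(φ_k(x_i))`, the kernel matrix is `A(x) A(x)ᴴ`, so its determinant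
is `|det A(x)|² = |∑_σ sign σ · ∏_i φ_{σ i}(x_i)|²`. By Fubini, the product functions
`x ↦ ∏_i φ_{σ i}(x_i)` are orthonormal in `L²(μ^{⊗n})`, so Parseval's identity gives
`∫ |det A|² = ∑_σ (sign σ)² = n!`.
-/

open MeasureTheory ComplexConjugate Matrix Equiv

section Orthonormal

variable {X : Type*} [MeasurableSpace X] {μ : Measure X}

theorem memLp_two_of_integral_mul_conj_self_ne_zero {f : X → ℂ} (hf : AEStronglyMeasurable f μ)
    (h : ∫ x, f x * conj (f x) ∂μ ≠ 0) : MemLp f 2 μ := by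
  have hint : Integrable (fun x => f x * conj (f x)) μ := by
    by_contra hnot
    exact h (integral_undef hnot)
  refine (memLp_two_iff_integrable_sq_norm hf).2 (hint.norm.congr (.of_forall fun x => ?_))
  simp only [Complex.mul_conj', norm_pow, Complex.norm_real, norm_norm]

theorem MeasureTheory.MemLp.integrable_mul_conj {f g : X → ℂ} (hf : MemLp f 2 μ)
    (hg : MemLp g 2 μ) : Integrable (fun x => f x * conj (g x)) μ :=
  hf.integrable_mul (p := 2) (q := 2) hg.star

theorem integral_sum_mul_conj_sum_of_orthonormal {κ : Type*} [Fintype κ] [DecidableEq κ]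
    {f : κ → X → ℂ} (hint : ∀ k l, Integrable (fun x => f k x * conj (f l x)) μ)
    (horth : ∀ k l, ∫ x, f k x * conj (f l x) ∂μ = if k = l then 1 else 0) (c : κ → ℂ) :
    ∫ x, (∑ k, c k * f k x) * conj (∑ k, c k * f k x) ∂μ = ∑ k, c k * conj (c k) := by
  have hexpand : ∀ x, (∑ k, c k * f k x) * conj (∑ k, c k * f k x)
      = ∑ k, ∑ l, c k * conj (c l) * (f k x * conj (f l x)) := fun x => by
    simp only [map_sum, map_mul, Finset.sum_mul_sum]
    exact Finset.sum_congr rfl fun k _ => Finset.sum_congr rfl fun l _ => by ring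
  simp_rw [hexpand]
  rw [integral_finsetSum _ fun k _ => integrable_finsetSum _ fun l _ => (hint k l).const_mul _]
  refine Finset.sum_congr rfl fun k _ => ?_
  rw [integral_finsetSum _ fun l _ => (hint k l).const_mul _]
  simp_rw [integral_const_mul, horth, mul_ite, mul_one, mul_zero, Finset.sum_ite_eq,
    Finset.mem_univ, if_true]

end Orthonormal

theorem prod_mul_conj_prod {ι X : Type*} [Fintype ι] (f g : ι → X → ℂ) (x : ι → X) :
    (∏ i, f i (x i)) * conj (∏ i, g i (x i)) = ∏ i, f i (x i) * conj (g i (x i)) := by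
  rw [map_prod, Finset.prod_mul_distrib]

section ProductFunctions

variable {X : Type*} [MeasurableSpace X] {μ : Measure X} [SigmaFinite μ]
  {ι : Type*} [Fintype ι]

theorem integrable_prod_mul_conj_prod {f g : ι → X → ℂ}
    (hint : ∀ i, Integrable (fun y => f i y * conj (g i y)) μ) :
    Integrable (fun x : ι → X => (∏ i, f i (x i)) * conj (∏ i, g i (x i)))
      (Measure.pi fun _ => μ) := by
  simp_rw [prod_mul_conj_prod]
  exact Integrable.fintype_prod hint

theorem integral_prod_mul_conj_prod (f g : ι → X → ℂ) :
    ∫ x : ι → X, (∏ i, f i (x i)) * conj (∏ i, g i (x i)) ∂(Measure.pi fun _ => μ)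
      = ∏ i, ∫ y, f i y * conj (g i y) ∂μ := by
  simp_rw [prod_mul_conj_prod]
  exact integral_fintype_prod_eq_prod (fun i y => f i y * conj (g i y))

theorem integral_prod_mul_conj_prod_of_orthonormal {κ : Type*} [DecidableEq ι] [DecidableEq κ]
    {φ : κ → X → ℂ} (horth : ∀ k l, ∫ y, φ k y * conj (φ l y) ∂μ = if k = l then 1 else 0)
    (σ τ : ι → κ) :
    ∫ x : ι → X, (∏ i, φ (σ i) (x i)) * conj (∏ i, φ (τ i) (x i)) ∂(Measure.pi fun _ => μ)
      = if σ = τ then 1 else 0 := by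
  simp_rw [integral_prod_mul_conj_prod, horth, Finset.prod_boole, funext_iff, Finset.mem_univ,
    true_implies]

end ProductFunctions

theorem Matrix.det_of_sum_mul_star {ι R : Type*} [Fintype ι] [DecidableEq ι]
    [CommRing R] [StarRing R] (a : ι → ι → R) :
    det (of fun i j => ∑ k, a k i * star (a k j)) = det (of a) * star (det (of a)) := by
  have hK : (of fun i j => ∑ k, a k i * star (a k j)) = (of a)ᵀ * (of a)ᵀᴴ := by
    ext i j
    simp [Matrix.mul_apply]
  rw [hK, det_mul, det_conjTranspose, det_transpose]

theorem stmt_1 {S : Type*} [MeasurableSpace S] (μ : Measure S) [SigmaFinite μ]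
    (n : ℕ) (φ : Fin n → S → ℂ) (hmeas : ∀ i, Measurable (φ i))
    (horth : ∀ i j, ∫ x, φ i x * (starRingEnd ℂ) (φ j x) ∂μ = if i = j then 1 else 0) :
    ∫ x : Fin n → S,
        Matrix.det (Matrix.of fun i j : Fin n =>
          ∑ k : Fin n, φ k (x i) * (starRingEnd ℂ) (φ k (x j)))
        ∂(Measure.pi fun _ : Fin n => μ) = (n.factorial : ℂ) := by
  have hL2 : ∀ i, MemLp (φ i) 2 μ := fun i =>
    memLp_two_of_integral_mul_conj_self_ne_zero (hmeas i).aestronglyMeasurable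
      (by simp [horth])
  have hdet : ∀ x : Fin n → S, det (of fun i j => ∑ k, φ k (x i) * conj (φ k (x j)))
      = (∑ σ : Perm (Fin n), ((Perm.sign σ : ℤ) : ℂ) * ∏ i, φ (σ i) (x i))
        * conj (∑ σ : Perm (Fin n), ((Perm.sign σ : ℤ) : ℂ) * ∏ i, φ (σ i) (x i)) := fun x => by
    rw [← Complex.star_def, det_of_sum_mul_star fun k i => φ k (x i), det_apply']
    simp only [of_apply]
  simp_rw [hdet]
  have hint_prod : ∀ σ τ : Perm (Fin n), Integrable (fun x : Fin n → S =>
      (∏ i, φ (σ i) (x i)) * conj (∏ i, φ (τ i) (x i))) (Measure.pi fun _ => μ) :=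
    fun σ τ => integrable_prod_mul_conj_prod fun i => (hL2 _).integrable_mul_conj (hL2 _)
  have horth_prod : ∀ σ τ : Perm (Fin n), ∫ x : Fin n → S,
      (∏ i, φ (σ i) (x i)) * conj (∏ i, φ (τ i) (x i)) ∂(Measure.pi fun _ => μ)
        = if σ = τ then 1 else 0 := fun σ τ => by
    rw [integral_prod_mul_conj_prod_of_orthonormal horth]
    simp
  rw [integral_sum_mul_conj_sum_of_orthonormal hint_prod horth_prod]
  simp [← Int.cast_mul, ← Units.val_mul, Fintype.card_perm]
end

section
/- Let S be a set, let (Ω, ℱ, P) be a probability space, and for each x ∈ S let A_x ∈ ℱ be a measurable event (interpreted as the event that the point x belongs to a random subset X of S). Let K : S × S → ℂ and suppose that for every k ≥ 1 and all distinct x_1, …, x_k ∈ S, P(A_{x_1} ∩ ⋯ ∩ A_{x_k}) = det((K(x_i, x_j))_{1 ≤ i,j ≤ k}). Then for all m ≥ 1, all 0 ≤ k ≤ m, and all distinct x_1, …, x_m ∈ S, P(A_{x_1} ∩ ⋯ ∩ A_{x_k} ∩ A_{x_{k+1}}^c ∩ ⋯ ∩ A_{x_m}^c) = det((K̃(i,j))_{1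 ≤ i,j ≤ m}), where K̃(i,j) = K(x_i, x_j) if i ≤ k and K̃(i,j) = δ_{ij} − K(x_i, x_j) if i ≥ k+1. -/
/-!
Both sides obey the same recursion in an excluded index `p`. For the probabilities,
`P(F ∩ A_pᶜ) = P(F) - P(F ∩ A_p)`. For the determinants, row `p` of the kernel matrix is
`e_p` minus row `p` of the matrix in which `p` is included, so by linearity in that row the
determinant is the principal minor at `p` minus the determinant with `p` included. Induction
on the number of points, and then on the number of excluded ones, reduces everything to the
case where all points are included, which is the hypothesis.
-/

open MeasureTheory

namespace Matrix

theorem det_updateRow_single_sub_self {R : Type*} [CommRing R] {n : ℕ}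
    (M : Matrix (Fin (n + 1)) (Fin (n + 1)) R) (p : Fin (n + 1)) :
    (M.updateRow p (Pi.single p 1 - M p)).det =
      (M.submatrix p.succAbove p.succAbove).det - M.det := by
  rw [sub_eq_add_neg, det_updateRow_add, ← neg_one_smul R (M p), det_updateRow_smul,
    updateRow_eq_self, ← adjugate_apply, adjugate_fin_succ_eq_det_submatrix,
    Even.neg_one_pow ⟨_, rfl⟩]
  ring

end Matrix

section InclusionExclusion

variable {S Ω : Type*} {m : ℕ}

def inclusionEvent (A : S → Set Ω) (x : Fin m → S) (I : Finset (Fin m)) : Set Ω :=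
  ⋂ i, if i ∈ I then A (x i) else (A (x i))ᶜ

def inclusionKernel (K : S → S → ℂ) (x : Fin m → S) (I : Finset (Fin m)) :
    Matrix (Fin m) (Fin m) ℂ :=
  Matrix.of fun i j =>
    if i ∈ I then K (x i) (x j) else (if i = j then 1 else 0) - K (x i) (x j)

theorem Finset.preimage_succAbove_insert_self (I : Finset (Fin (m + 1))) (p : Fin (m + 1)) :
    (insert p I).preimage p.succAbove Fin.succAbove_right_injective.injOn =
      I.preimage p.succAbove Fin.succAbove_right_injective.injOn := by
  ext j
  simp [Fin.succAbove_ne]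

theorem inclusionEvent_eq_inter_succAbove (A : S → Set Ω) (x : Fin (m + 1) → S)
    (I : Finset (Fin (m + 1))) (p : Fin (m + 1)) :
    inclusionEvent A x I = (if p ∈ I then A (x p) else (A (x p))ᶜ) ∩
      inclusionEvent A (x ∘ p.succAbove)
        (I.preimage p.succAbove Fin.succAbove_right_injective.injOn) := by
  ext ω
  simp [inclusionEvent, Set.mem_iInter, Fin.forall_iff_succAbove p]

theorem measureReal_inclusionEvent_of_notMem [MeasurableSpace Ω] (P : Measure Ω)
    [IsFiniteMeasure P] (A : S → Set Ω) (x : Fin (m + 1) → S) {I : Finset (Fin (m + 1))}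
    {p : Fin (m + 1)} (hp : p ∉ I) (hAp : MeasurableSet (A (x p))) :
    P.real (inclusionEvent A x I) =
      P.real (inclusionEvent A (x ∘ p.succAbove)
        (I.preimage p.succAbove Fin.succAbove_right_injective.injOn)) -
      P.real (inclusionEvent A x (insert p I)) := by
  rw [inclusionEvent_eq_inter_succAbove A x I p, inclusionEvent_eq_inter_succAbove A x _ p,
    if_neg hp, if_pos (I.mem_insert_self p), Finset.preimage_succAbove_insert_self,
    Set.inter_comm, ← Set.sdiff_eq, Set.inter_comm, eq_sub_iff_add_eq',
    measureReal_inter_add_sdiff hAp]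

theorem inclusionKernel_eq_updateRow_of_notMem (K : S → S → ℂ) (x : Fin m → S)
    {I : Finset (Fin m)} {p : Fin m} (hp : p ∉ I) :
    inclusionKernel K x I = (inclusionKernel K x (insert p I)).updateRow p
      (Pi.single p 1 - inclusionKernel K x (insert p I) p) := by
  ext i j
  rcases eq_or_ne i p with rfl | hi
  · simp [inclusionKernel, hp, Pi.single_apply, eq_comm]
  · simp [inclusionKernel, hi]

theorem submatrix_succAbove_inclusionKernel (K : S → S → ℂ) (x : Fin (m + 1) → S)
    (I : Finset (Fin (m + 1))) (p : Fin (m + 1)) :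
    (inclusionKernel K x I).submatrix p.succAbove p.succAbove =
      inclusionKernel K (x ∘ p.succAbove)
        (I.preimage p.succAbove Fin.succAbove_right_injective.injOn) := by
  ext i j
  simp [inclusionKernel]

theorem det_inclusionKernel_of_notMem (K : S → S → ℂ) (x : Fin (m + 1) → S)
    {I : Finset (Fin (m + 1))} {p : Fin (m + 1)} (hp : p ∉ I) :
    (inclusionKernel K x I).det =
      (inclusionKernel K (x ∘ p.succAbove)
        (I.preimage p.succAbove Fin.succAbove_right_injective.injOn)).det -
      (inclusionKernel K x (insert p I)).det := by
  rw [inclusionKernel_eq_updateRow_of_notMem K x hp, Matrix.det_updateRow_single_sub_self,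
    submatrix_succAbove_inclusionKernel, Finset.preimage_succAbove_insert_self]

theorem measureReal_inclusionEvent_eq_det [MeasurableSpace Ω] (P : Measure Ω)
    [IsProbabilityMeasure P] (A : S → Set Ω) (hA : ∀ s, MeasurableSet (A s))
    (K : S → S → ℂ)
    (hdet : ∀ k, 1 ≤ k → ∀ x : Fin k → S, Function.Injective x →
      (P.real (⋂ i, A (x i)) : ℂ) = (Matrix.of fun i j : Fin k => K (x i) (x j)).det)
    (x : Fin m → S) (hx : Function.Injective x) (I : Finset (Fin m)) :
    (P.real (inclusionEvent A x I) : ℂ) = (inclusionKernel K x I).det := by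
  induction m with
  | zero => simp [inclusionEvent]
  | succ m ih =>
    obtain ⟨E, rfl⟩ : ∃ E, I = Eᶜ := ⟨Iᶜ, (compl_compl I).symm⟩
    induction E using Finset.induction_on with
    | empty => simpa [inclusionEvent, inclusionKernel] using hdet (m + 1) m.succ_pos x hx
    | insert p E hpE ihE =>
      have hp : p ∉ (insert p E)ᶜ := by simp
      have hins : insert p (insert p E)ᶜ = Eᶜ := by
        ext i
        by_cases hi : i = p <;> simp [hi, hpE]
      rw [measureReal_inclusionEvent_of_notMem P A x hp (hA _),
        det_inclusionKernel_of_notMem K x hp, hins, Complex.ofReal_sub, ihE,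
        ih _ (hx.comp Fin.succAbove_right_injective)]

end InclusionExclusion

theorem stmt_3 {S : Type*} {Ω : Type*} [MeasurableSpace Ω]
    (P : Measure Ω) [IsProbabilityMeasure P]
    (A : S → Set Ω) (hA : ∀ s, MeasurableSet (A s)) (K : S → S → ℂ)
    (hdet : ∀ (k : ℕ), 1 ≤ k → ∀ x : Fin k → S, Function.Injective x →
      ((P (⋂ i, A (x i))).toReal : ℂ)
        = Matrix.det (Matrix.of fun i j : Fin k => K (x i) (x j))) :
    ∀ (m k : ℕ), 1 ≤ m → k ≤ m → ∀ x : Fin m → S, Function.Injective x →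
      ((P (⋂ i : Fin m, if (i : ℕ) < k then A (x i) else (A (x i))ᶜ)).toReal : ℂ)
        = Matrix.det (Matrix.of fun i j : Fin m =>
            if (i : ℕ) < k then K (x i) (x j)
            else (if i = j then 1 else 0) - K (x i) (x j)) := by
  intro m k _ _ x hx
  simpa [inclusionEvent, inclusionKernel, Measure.real] using
    measureReal_inclusionEvent_eq_det P A hA K hdet x hx {i | (i : ℕ) < k}
end

section
/- Let S be a set, let (Ω, ℱ, P) be a probability space, and for each x ∈ S let A_x ∈ ℱ be a measurable event (the event that x belongs to a random subset X of S). Let K : S × S → ℂ and suppose that for every k ≥ 1 and all distinct x_1, …, x_k ∈ S, P(A_{x_1} ∩ ⋯ ∩ A_{x_k}) = det((K(x_i, x_j))_{1 ≤ i,j ≤ k}). Then for all k ≥ 1 and all distinct x_1, …, x_k ∈ S, P(A_{x_1}^c ∩ ⋯ ∩ A_{x_k}^c) = det(I_k − (K(x_i, x_j))_{1 ≤ i,j ≤ k}), where I_k is the k × k identity matrix. -/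
/-!
Both sides expand by inclusion–exclusion over the subsets `s` of the points: on the measure side
`P(⋂ Aᶜ) = ∑ₛ (-1)^|s| P(⋂_{i ∈ s} A_{x_i})`, and on the matrix side, by multilinearity of
the determinant in the rows, `det (1 - M) = ∑ₛ (-1)^|s| det M[s, s]`. The principal minors
`det M[s, s]` are the correlation determinants of the sub-configurations, and the empty term
is `P Ω = 1`.
-/

open MeasureTheory Finset

theorem Matrix.det_one_sub_eq_sum_principal_minors {n R : Type*} [Fintype n] [DecidableEq n]
    [CommRing R] (M : Matrix n n R) :
    (1 - M).det = ∑ s : Finset n, (-1) ^ #s * (M.submatrix ((↑) : s → n) (↑)).det := by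
  rw [sub_eq_neg_add]
  show detRowAlternating (-M + 1) = _
  refine (detRowAlternating.map_add_univ (-M) (1 : Matrix n n R)).trans
    (sum_congr rfl fun s _ => ?_)
  rw [← Fintype.card_coe s, ← det_neg]
  exact det_piecewise_one_eq_submatrix_det (-M) s

theorem MeasureTheory.measureReal_iInter_compl_eq_sum {Ω ι : Type*} [MeasurableSpace Ω]
    [Fintype ι] {μ : Measure Ω} [IsFiniteMeasure μ] {B : ι → Set Ω}
    (hB : ∀ i, MeasurableSet (B i)) :
    μ.real (⋂ i, (B i)ᶜ) = ∑ u : Finset ι, (-1) ^ #u * μ.real (⋂ i ∈ u, B i) := by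
  classical
  have hunion := measureReal_biUnion_eq_sum_powerset (μ := μ) (t := univ) fun i _ => hB i
  simp only [mem_univ, Set.iUnion_true, powerset_univ] at hunion
  rw [← Set.compl_iUnion, measureReal_compl (MeasurableSet.iUnion hB), hunion,
    ← sum_filter_add_sum_filter_not univ (·.Nonempty)]
  simp [not_nonempty_iff_eq_empty, pow_succ, filter_eq', add_comm]

theorem measureReal_iInter_eq_det {S Ω ι : Type*} [MeasurableSpace Ω] [Fintype ι]
    [DecidableEq ι] {P : Measure Ω} [IsProbabilityMeasure P] {A : S → Set Ω} {K : S → S → ℂ}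
    (hdet : ∀ (k : ℕ), 1 ≤ k → ∀ x : Fin k → S, Function.Injective x →
      ((P (⋂ i, A (x i))).toReal : ℂ)
        = Matrix.det (Matrix.of fun i j : Fin k => K (x i) (x j)))
    {x : ι → S} (hx : Function.Injective x) :
    (P.real (⋂ i, A (x i)) : ℂ) = Matrix.det (Matrix.of fun i j => K (x i) (x j)) := by
  cases isEmpty_or_nonempty ι
  · simp
  · let e := (Fintype.equivFin ι).symm
    have h := hdet (Fintype.card ι) Fintype.card_pos (fun i => x (e i)) (hx.comp e.injective)
    rw [← measureReal_def, e.surjective.iInter_comp (fun i => A (x i))] at h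
    rw [h, ← Matrix.det_submatrix_equiv_self e]
    rfl

theorem stmt_4 {S : Type*} {Ω : Type*} [MeasurableSpace Ω]
    (P : Measure Ω) [IsProbabilityMeasure P]
    (A : S → Set Ω) (hA : ∀ s, MeasurableSet (A s)) (K : S → S → ℂ)
    (hdet : ∀ (k : ℕ), 1 ≤ k → ∀ x : Fin k → S, Function.Injective x →
      ((P (⋂ i, A (x i))).toReal : ℂ)
        = Matrix.det (Matrix.of fun i j : Fin k => K (x i) (x j))) :
    ∀ (k : ℕ), 1 ≤ k → ∀ x : Fin k → S, Function.Injective x →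
      ((P (⋂ i, (A (x i))ᶜ)).toReal : ℂ)
        = Matrix.det ((1 : Matrix (Fin k) (Fin k) ℂ)
            - Matrix.of fun i j : Fin k => K (x i) (x j)) := by
  intro k _ x hx
  rw [← measureReal_def, measureReal_iInter_compl_eq_sum fun i => hA (x i),
    Matrix.det_one_sub_eq_sum_principal_minors]
  push_cast
  refine sum_congr rfl fun s _ => ?_
  rw [← Set.iInter_subtype (· ∈ s) fun i => A (x i), measureReal_iInter_eq_det hdet
    (x := fun i : s => x i) (hx.comp Subtype.val_injective)]
  rfl
end

section
/- Let G = (V, E) be a finite connected simple graph with V = {1, …, n}, and fix an arbitrary orientation of the edges, i.e. for each edge e ∈ E an ordered pair (tail(e), head(e)) of its endpoints. Let A_G be the n × |E| matrix with A_G(v, e) = +1 if e starts at v (v = tail(e)), −1 if e ends at v (v = head(e)), and 0 if e is not incident to v. Let Ã_G be the (n−1) × |E| matrix obtained from A_G by deleting the last row. Then the number N(G) of spanning trees of G (spanning subgraphs which are trees) satisfies N(G) = det(Ã_G · Ã_G^T). -/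
/-!
Averaging the Cauchy–Binet expansion over the orderings of the chosen columns gives
`n! · det (Ã Ãᵀ) = ∑_{f : Fin n → E} det (Ã_f)²`, where `Ã_f` has the columns `f 0, …, f (n-1)`.
This minor is the reduced oriented incidence matrix of the graph `H_f` spanned by those `n` edges
on the `n + 1` vertices. If `H_f` is disconnected, the indicator of a component avoiding the
deleted last vertex is a left null vector, so the minor vanishes. If `H_f` is a tree, pairing each
remaining vertex with the edge to its parent (towards the last vertex) makes the minor triangular
with respect to the distance to the last vertex, with diagonal entries `±1`. Having at most `n`
edges, `H_f` is a tree as soon as it is connected, so `det (Ã_f)²` is the indicator of `H_f` being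
a tree, and every spanning tree arises from exactly `n!` maps `f`.
-/

open Finset Equiv
open scoped Nat

namespace Matrix

variable {m κ R : Type*} [Fintype m] [DecidableEq m] [CommRing R]

section

variable [Fintype κ]

theorem det_mul_eq_sum_prod_mul_det_submatrix (M : Matrix m κ R) (N : Matrix κ m R) :
    (M * N).det = ∑ f : m → κ, (∏ i, N (f i) i) * (M.submatrix id f).det := by
  simp only [det_apply', mul_apply, prod_univ_sum, Fintype.piFinset_univ, mul_sum,
    submatrix_apply, id_eq]
  rw [sum_comm]
  refine sum_congr rfl fun f _ => sum_congr rfl fun σ _ => ?_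
  rw [prod_mul_distrib]
  ring

/-- Cauchy–Binet summed over all column maps instead of column subsets, so that no ordering
of the subsets is needed. -/
theorem factorial_mul_det_mul (M : Matrix m κ R) (N : Matrix κ m R) :
    ((Fintype.card m)! : R) * (M * N).det
      = ∑ f : m → κ, (M.submatrix id f).det * (N.submatrix f id).det := by
  have hperm (τ : Perm m) : (M * N).det = ∑ f : m → κ,
      (Perm.sign τ : R) * (∏ i, N (f (τ i)) i) * (M.submatrix id f).det := by
    rw [det_mul_eq_sum_prod_mul_det_submatrix, ← (τ.arrowCongr (Equiv.refl κ)).symm.sum_comp]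
    refine sum_congr rfl fun f _ => ?_
    change (∏ i, N (f (τ i)) i) * ((M.submatrix id f).submatrix id τ).det = _
    rw [det_permute']
    ring
  calc ((Fintype.card m)! : R) * (M * N).det = ∑ τ : Perm m, (M * N).det := by
        rw [sum_const, card_univ, Fintype.card_perm, nsmul_eq_mul]
    _ = _ := by
        rw [sum_congr rfl fun τ _ => hperm τ, sum_comm]
        refine sum_congr rfl fun f _ => ?_
        rw [det_apply' (N.submatrix f id), mul_sum]
        refine sum_congr rfl fun τ _ => ?_
        simp only [submatrix_apply, id_eq]
        ring

end

theorem det_eq_prod_diag_of_ne_zero_imp_lt {α : Type*} [AddCommMonoid α] [PartialOrder α]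
    [IsOrderedCancelAddMonoid α] {M : Matrix m m R} (b : m → α)
    (hM : ∀ i j, M i j ≠ 0 → i = j ∨ b i < b j) : M.det = ∏ i, M i i := by
  rw [det_apply']
  refine (sum_eq_single 1 (fun σ _ hσ => ?_) (by simp)).trans (by simp)
  by_contra hne
  have hM' (i : m) : M (σ i) i ≠ 0 := fun h0 =>
    hne (mul_eq_zero_of_right _ (prod_eq_zero (mem_univ i) h0))
  obtain ⟨i, hi⟩ : ∃ i, σ i ≠ i := not_forall.1 fun h => hσ (Equiv.ext h)
  have hlt : ∑ i, b (σ i) < ∑ i, b i :=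
    sum_lt_sum (fun j _ => (hM _ _ (hM' j)).elim (fun h => (congrArg b h).le) le_of_lt)
      ⟨i, mem_univ _, (hM _ _ (hM' i)).resolve_left hi⟩
  exact hlt.ne (Equiv.sum_comp σ b)

end Matrix

namespace Set

variable {α : Type*} {n : ℕ}

theorem card_fun_fin_range_eq {s : Set α} (hfin : s.Finite) (hs : s.ncard = n) :
    Nat.card {f : Fin n → α // Set.range f = s} = n ! := by
  have : Finite s := hfin
  have hcard : Nat.card s = n := by rwa [Nat.card_coe_set_eq]
  have e : {f : Fin n → α // Set.range f = s} ≃ (Fin n ≃ s) :=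
    { toFun := fun f => Equiv.ofBijective
        (Set.codRestrict f.1 s fun i => f.2.subset (Set.mem_range_self i))
        (Function.Surjective.bijective_of_nat_card_le (fun ⟨x, hx⟩ => by
          obtain ⟨i, rfl⟩ := f.2.symm.subset hx
          exact ⟨i, rfl⟩) (by rw [hcard, Nat.card_fin]))
      invFun := fun e => ⟨Subtype.val ∘ e, by
        rw [Set.range_comp, e.range_eq_univ, Set.image_univ, Subtype.range_coe]⟩
      left_inv := fun f => rfl
      right_inv := fun e => Equiv.ext fun i => rfl }
  rw [Nat.card_congr (e.trans (Equiv.equivCongr (.refl _) (Finite.equivFinOfCardEq hcard))),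
    Nat.card_perm, Nat.card_fin]

theorem card_fun_fin_range_mem [Finite α] (𝒮 : Set (Set α))
    (h𝒮 : ∀ s ∈ 𝒮, s.ncard = n) :
    Nat.card {f : Fin n → α // Set.range f ∈ 𝒮} = Nat.card 𝒮 * n ! := by
  have : Fintype 𝒮 := Fintype.ofFinite _
  rw [← Nat.card_congr (Equiv.sigmaSubtypeFiberEquivSubtype Set.range fun _ => Iff.rfl),
    Nat.card_sigma]
  simp [Set.card_fun_fin_range_eq (Set.toFinite _) (h𝒮 _ (Subtype.prop _))]

end Set

namespace SimpleGraph

variable {V : Type*} {G : SimpleGraph V}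

theorem Reachable.exists_adj_dist_lt {v r : V} (hr : G.Reachable v r) (hne : v ≠ r) :
    ∃ w, G.Adj v w ∧ G.dist w r < G.dist v r := by
  obtain ⟨p, hp⟩ := hr.exists_walk_length_eq_dist
  cases p with
  | nil => exact absurd rfl hne
  | cons hadj q =>
    refine ⟨_, hadj, ?_⟩
    have := dist_le q
    rw [Walk.length_cons] at hp
    omega

theorem Connected.isTree_of_card_edgeSet_add_one_le [Finite V] (hG : G.Connected)
    (h : Nat.card G.edgeSet + 1 ≤ Nat.card V) : G.IsTree :=
  isTree_iff_connected_and_card.2 ⟨hG, le_antisymm h hG.card_vert_le_card_edgeSet_add_one⟩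

theorem isTree_fromEdgeSet_iff [Finite V] {s : Set (Sym2 V)} (hs : ∀ e ∈ s, ¬ e.IsDiag) :
    (fromEdgeSet s).IsTree ↔ (fromEdgeSet s).Connected ∧ s.ncard + 1 = Nat.card V := by
  have : (fromEdgeSet s).edgeSet = s := by
    rw [edgeSet_fromEdgeSet, sdiff_eq_left, Set.disjoint_left]
    exact fun e he hd => hs e he hd
  rw [isTree_iff_connected_and_card, this, Nat.card_coe_set_eq]

theorem card_fun_fin_isTree [Finite V] {n : ℕ} (hV : Nat.card V = n + 1) :
    Nat.card {f : Fin n → G.edgeSet // (fromEdgeSet (Subtype.val '' Set.range f)).IsTree}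
      = Nat.card {T : Set (Sym2 V) // T ⊆ G.edgeSet ∧ (fromEdgeSet T).IsTree} * n ! := by
  set 𝒮 : Set (Set G.edgeSet) := {S | (fromEdgeSet (Subtype.val '' S)).IsTree}
  have h𝒮 : Set.image Subtype.val '' 𝒮
      = {T | T ⊆ G.edgeSet ∧ (fromEdgeSet T).IsTree} := by
    ext T
    constructor
    · rintro ⟨S, hS, rfl⟩
      exact ⟨Subtype.coe_image_subset _ _, hS⟩
    · rintro ⟨hT, htree⟩
      have hT' : Subtype.val '' (Subtype.val ⁻¹' T : Set G.edgeSet) = T :=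
        Set.image_preimage_eq_of_subset (by rwa [Subtype.range_coe])
      refine ⟨Subtype.val ⁻¹' T, ?_, hT'⟩
      show (fromEdgeSet _).IsTree
      rwa [hT']
  have hcard (S) (hS : S ∈ 𝒮) : S.ncard = n := by
    have hdiag (e : Sym2 V) (he : e ∈ Subtype.val '' S) : ¬ e.IsDiag := by
      obtain ⟨e', -, rfl⟩ := he
      exact G.not_isDiag_of_mem_edgeSet e'.2
    have := ((isTree_fromEdgeSet_iff hdiag).1 hS).2
    rw [hV, Set.ncard_image_of_injective _ Subtype.val_injective] at this
    omega
  change Nat.card {f : Fin n → G.edgeSet // Set.range f ∈ 𝒮} = _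
  rw [Set.card_fun_fin_range_mem 𝒮 hcard,
    ← Nat.card_image_of_injective Set.image_val_injective, h𝒮]
  rfl

end SimpleGraph

section OrientedIncidence

variable {V ι : Type*}

def orientedIncMatrix (R : Type*) [Ring R] [DecidableEq V] (t h : ι → V) : Matrix V ι R :=
  Matrix.of fun v j => (if v = t j then 1 else 0) - if v = h j then 1 else 0

def graphOfEdges (t h : ι → V) : SimpleGraph V :=
  SimpleGraph.fromEdgeSet (Set.range fun j => s(t j, h j))

variable {t h : ι → V}

theorem card_edgeSet_graphOfEdges_le [Finite ι] :
    Nat.card (graphOfEdges t h).edgeSet ≤ Nat.card ι :=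
  calc Nat.card (graphOfEdges t h).edgeSet ≤ Nat.card (Set.range fun j => s(t j, h j)) :=
        Nat.card_mono (Set.toFinite _) (by
          rw [graphOfEdges, SimpleGraph.edgeSet_fromEdgeSet]; exact Set.sdiff_subset)
    _ ≤ Nat.card ι := Finite.card_range_le _

variable {R : Type*} [DecidableEq V] [Ring R]

theorem vecMul_orientedIncMatrix [Fintype V] (c : V → R) (j : ι) :
    Matrix.vecMul c (orientedIncMatrix R t h) j = c (t j) - c (h j) := by
  simp [orientedIncMatrix, Matrix.vecMul, dotProduct, mul_sub]

theorem orientedIncMatrix_apply_of_notMem {v : V} {j : ι} (hv : v ∉ s(t j, h j)) :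
    orientedIncMatrix R t h v j = 0 := by
  simp_all [orientedIncMatrix]

theorem sq_orientedIncMatrix_apply_of_mem {v : V} {j : ι} (hne : t j ≠ h j)
    (hv : v ∈ s(t j, h j)) :
    orientedIncMatrix R t h v j ^ 2 = 1 := by
  rcases Sym2.mem_iff.1 hv with rfl | rfl <;> simp [orientedIncMatrix, hne, hne.symm]

theorem orientedIncMatrix_apply_of_ne {v : V} {j : ι} (hne : t j ≠ h j) :
    orientedIncMatrix R t h v j = if v = t j then 1 else if v = h j then -1 else 0 := by
  by_cases hv : v = t j
  · simp [orientedIncMatrix, hv, hne]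
  · by_cases hv' : v = h j
    · simp [orientedIncMatrix, hv', hne.symm]
    · simp [orientedIncMatrix, hv, hv']

end OrientedIncidence

section Reduced

variable {R : Type*} [CommRing R] {n : ℕ} {t h : Fin n → Fin (n + 1)}

theorem det_submatrix_castSucc_orientedIncMatrix_eq_zero [IsDomain R]
    (hG : ¬ (graphOfEdges t h).Connected) :
    ((orientedIncMatrix R t h).submatrix Fin.castSucc id).det = 0 := by
  classical
  obtain ⟨u, hu⟩ : ∃ u, ¬ (graphOfEdges t h).Reachable u (Fin.last n) := by
    by_contra! hr
    exact hG ((SimpleGraph.connected_iff_exists_forall_reachable _).2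
      ⟨Fin.last n, fun w => (hr w).symm⟩)
  set c : Fin (n + 1) → R := fun v => if (graphOfEdges t h).Reachable u v then 1 else 0
  have hc_edge (j : Fin n) : c (t j) = c (h j) := by
    by_cases hj : t j = h j
    · rw [hj]
    have hadj : (graphOfEdges t h).Adj (t j) (h j) :=
      (SimpleGraph.fromEdgeSet_adj _).2 ⟨⟨j, rfl⟩, hj⟩
    have : (graphOfEdges t h).Reachable u (t j) ↔ (graphOfEdges t h).Reachable u (h j) :=
      ⟨fun hr => hr.trans hadj.reachable, fun hr => hr.trans hadj.symm.reachable⟩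
    simp only [c, this]
  have hc_last : c (Fin.last n) = 0 := if_neg hu
  obtain ⟨i, rfl⟩ := Fin.exists_castSucc_eq.2 fun hu' => hu (hu' ▸ .rfl)
  rw [← Matrix.exists_vecMul_eq_zero_iff]
  refine ⟨c ∘ Fin.castSucc, fun h0 => by simpa [c] using congrFun h0 i, funext fun j => ?_⟩
  calc _ = Matrix.vecMul c (orientedIncMatrix R t h) j := by
        simp [Matrix.vecMul, dotProduct, Fin.sum_univ_castSucc, hc_last]
    _ = 0 := by rw [vecMul_orientedIncMatrix, hc_edge, sub_self]

theorem exists_perm_parentEdge_of_isTree (hT : (graphOfEdges t h).IsTree) :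
    ∃ (σ : Perm (Fin n)) (pa : Fin n → Fin (n + 1)), ∀ k,
      s(t (σ k), h (σ k)) = s(k.castSucc, pa k) ∧ k.castSucc ≠ pa k ∧
        (graphOfEdges t h).dist (pa k) (Fin.last n)
          < (graphOfEdges t h).dist k.castSucc (Fin.last n) := by
  set d : Fin (n + 1) → ℕ := fun v => (graphOfEdges t h).dist v (Fin.last n)
  have hparent (v : Fin n) : ∃ w, (graphOfEdges t h).Adj v.castSucc w ∧ d w < d v.castSucc :=
    (hT.connected _ _).exists_adj_dist_lt (Fin.castSucc_lt_last v).ne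
  choose pa hpa_adj hpa_dist using hparent
  have hedge (v : Fin n) : ∃ j, s(t j, h j) = s(v.castSucc, pa v) :=
    ((SimpleGraph.fromEdgeSet_adj _).1 (hpa_adj v)).1
  choose ψ hψ using hedge
  have hψ_inj : Function.Injective ψ := by
    intro v w hvw
    have hvw' := hψ v
    rw [hvw, hψ w, Sym2.eq_iff] at hvw'
    rcases hvw' with ⟨hvw', -⟩ | ⟨hwv, hvw'⟩
    · exact Fin.castSucc_injective n hvw'.symm
    · have hv := hpa_dist v
      have hw := hpa_dist w
      rw [← hwv] at hv
      rw [hvw'] at hw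
      omega
  exact ⟨.ofBijective ψ (Finite.injective_iff_bijective.1 hψ_inj), pa,
    fun k => ⟨hψ k, (hpa_adj k).ne, hpa_dist k⟩⟩

theorem sq_det_submatrix_castSucc_orientedIncMatrix_of_isTree (hT : (graphOfEdges t h).IsTree) :
    ((orientedIncMatrix R t h).submatrix Fin.castSucc id).det ^ 2 = 1 := by
  obtain ⟨σ, pa, hσ⟩ := exists_perm_parentEdge_of_isTree hT
  set N := (orientedIncMatrix R t h).submatrix Fin.castSucc id
  have hsupp (i k : Fin n) (hik : N i (σ k) ≠ 0) : i = k ∨ i.castSucc = pa k := by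
    by_contra! hne
    refine hik (orientedIncMatrix_apply_of_notMem ?_)
    rw [id_eq, (hσ k).1, Sym2.mem_iff]
    exact fun hi => hi.elim (fun h' => hne.1 (Fin.castSucc_injective n h')) hne.2
  have hdiag (k : Fin n) : N k (σ k) ^ 2 = 1 := by
    refine sq_orientedIncMatrix_apply_of_mem (fun hth => (hσ k).2.1 ?_) ?_
    · exact Sym2.mk_isDiag_iff.1 ((hσ k).1 ▸ Sym2.mk_isDiag_iff.2 hth)
    · rw [id_eq, (hσ k).1]
      exact Sym2.mem_mk_left _ _
  have htri : (N.submatrix id σ).det = ∏ k, N k (σ k) :=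
    Matrix.det_eq_prod_diag_of_ne_zero_imp_lt
      (fun i => (graphOfEdges t h).dist i.castSucc (Fin.last n)) fun i k hik =>
        (hsupp i k hik).imp_right fun hi => hi ▸ (hσ k).2.2
  calc N.det ^ 2 = (N.submatrix id σ).det ^ 2 := by
        rw [Matrix.det_permute', mul_pow, ← Int.cast_pow, ← Units.val_pow_eq_pow_val,
          Int.units_sq, Units.val_one, Int.cast_one, one_mul]
    _ = 1 := by rw [htri, ← prod_pow]; exact prod_eq_one fun k _ => hdiag k

open scoped Classical in
theorem sq_det_submatrix_castSucc_orientedIncMatrix [IsDomain R] (t h : Fin n → Fin (n + 1)) :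
    ((orientedIncMatrix R t h).submatrix Fin.castSucc id).det ^ 2
      = if (graphOfEdges t h).IsTree then 1 else 0 := by
  split_ifs with hT
  · exact sq_det_submatrix_castSucc_orientedIncMatrix_of_isTree hT
  · have hG : ¬ (graphOfEdges t h).Connected := fun hG =>
      hT (hG.isTree_of_card_edgeSet_add_one_le (by
        simpa using Nat.add_le_add_right (card_edgeSet_graphOfEdges_le (t := t) (h := h)) 1))
    rw [det_submatrix_castSucc_orientedIncMatrix_eq_zero hG, zero_pow two_ne_zero]

end Reduced

theorem stmt_5_general (n : ℕ) (G : SimpleGraph (Fin (n + 1))) [Fintype G.edgeSet]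
    (tail head : G.edgeSet → Fin (n + 1))
    (hor : ∀ e : G.edgeSet, (e : Sym2 (Fin (n + 1))) = s(tail e, head e))
    (A : Matrix (Fin (n + 1)) G.edgeSet ℝ)
    (hA : ∀ v e, A v e = if v = tail e then 1 else if v = head e then -1 else 0)
    (Atil : Matrix (Fin n) G.edgeSet ℝ)
    (hAtil : ∀ i e, Atil i e = A (Fin.castSucc i) e) :
    (Nat.card {T : Set (Sym2 (Fin (n + 1))) //
        T ⊆ G.edgeSet ∧ (SimpleGraph.fromEdgeSet T).IsTree} : ℝ)
      = Matrix.det (Atil * Atil.transpose) := by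
  have hAtil' : Atil = (orientedIncMatrix ℝ tail head).submatrix Fin.castSucc id := by
    ext i e
    have hne : tail e ≠ head e := fun he =>
      G.not_isDiag_of_mem_edgeSet e.2 (by rw [hor e, he, Sym2.mk_isDiag_iff])
    rw [hAtil, hA, Matrix.submatrix_apply, id_eq, orientedIncMatrix_apply_of_ne hne]
  have hgraph (f : Fin n → G.edgeSet) : graphOfEdges (tail ∘ f) (head ∘ f)
      = SimpleGraph.fromEdgeSet (Subtype.val '' Set.range f) := by
    rw [graphOfEdges, ← Set.range_comp]
    exact congrArg _ (congrArg _ (funext fun j => (hor (f j)).symm))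
  have hsum : (Atil * Atil.transpose).det * n !
      = Nat.card {f : Fin n → G.edgeSet //
          (SimpleGraph.fromEdgeSet (Subtype.val '' Set.range f)).IsTree} := by
    classical
    have := Matrix.factorial_mul_det_mul Atil Atil.transpose
    rw [Fintype.card_fin] at this
    rw [mul_comm, this, Nat.card_eq_fintype_card, Fintype.card_subtype, ← Finset.sum_boole]
    refine Finset.sum_congr rfl fun f _ => ?_
    have hminor : Atil.submatrix id f
        = (orientedIncMatrix ℝ (tail ∘ f) (head ∘ f)).submatrix Fin.castSucc id := by
      rw [hAtil']
      rfl
    rw [← Matrix.transpose_submatrix, Matrix.det_transpose, ← sq, hminor,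
      sq_det_submatrix_castSucc_orientedIncMatrix, hgraph]
  rw [SimpleGraph.card_fun_fin_isTree (Nat.card_fin (n + 1)), Nat.cast_mul] at hsum
  exact (mul_right_cancel₀ (Nat.cast_ne_zero.2 n.factorial_ne_zero) hsum).symm

theorem stmt_5 (n : ℕ) (G : SimpleGraph (Fin (n + 1))) [DecidableRel G.Adj]
    [Fintype G.edgeSet] (hconn : G.Connected)
    (tail head : G.edgeSet → Fin (n + 1))
    (hor : ∀ e : G.edgeSet, (e : Sym2 (Fin (n + 1))) = s(tail e, head e))
    (A : Matrix (Fin (n + 1)) G.edgeSet ℝ)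
    (hA : ∀ v e, A v e = if v = tail e then 1 else if v = head e then -1 else 0)
    (Atil : Matrix (Fin n) G.edgeSet ℝ)
    (hAtil : ∀ i e, Atil i e = A (Fin.castSucc i) e) :
    (Nat.card {T : Set (Sym2 (Fin (n + 1))) //
        T ⊆ G.edgeSet ∧ (SimpleGraph.fromEdgeSet T).IsTree} : ℝ)
      = Matrix.det (Atil * Atil.transpose) :=
  stmt_5_general n G tail head hor A hA Atil hAtil
end

section
/- Let φ_1, …, φ_{n+1} : ℕ → ℂ be orthonormal in ℓ²(ℕ), i.e. Σ_{x ∈ ℕ} φ_i(x) · conj(φ_j(x)) = δ_{ij}. For a finite subset B ⊂ ℕ with elements listed in increasing order, let M_B = (φ_i(b_j)) with rows i = 1, …, n+1 and let Q_B = (φ_i(b_j)) with rows i = 1, …, n. For a finite A ⊂ ℕ and x ∈ ℕ, set r(A, x) = |{a ∈ A : a > x}|. Then for every n-element subset A ⊂ ℕ, Σ_{x ∈ ℕ ∖ A} (−1)^{r(A,x)} · conj(φ_{n+1}(x)) · det(M_{A ∪ {x}}) = det(Q_A), the sum converging absolutely. -/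
/-!
Write `v x = (φ_i x)_i` and, working with transposed matrices (points index rows), let `D w` be
the determinant with rows `v a_1, …, v a_n, w`, a linear function of `w`. Moving the row of `x` to
the bottom turns each summand into `D (conj (φ_{n+1} x) • v x)`. Orthonormality says
`∑_x conj (φ_{n+1} x) • v x = e_{n+1}`, so the sum over `x ∉ A` is
`D e_{n+1} - ∑_{a ∈ A} conj (φ_{n+1} a) • D (v a)`; each `D (v a)` has a repeated row and
vanishes, and expanding `D e_{n+1}` along its last row gives `det Q_A`.
-/

open Finset

namespace Finset

variable {α : Type*} [LinearOrder α]

theorem exists_orderEmbOfFin_insert_eq_insertNth {A : Finset α} {x : α} {n : ℕ}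
    (hA : #A = n) (h : #(insert x A) = n + 1) :
    ∃ p : Fin (n + 1), ⇑((insert x A).orderEmbOfFin h) = p.insertNth x (A.orderEmbOfFin hA) ∧
      (p : ℕ) + #{a ∈ A | x < a} = n := by
  set e := (insert x A).orderEmbOfFin h
  obtain ⟨p, hp⟩ : x ∈ Set.range e := by simp [e, range_orderEmbOfFin]
  refine ⟨p, Fin.eq_insertNth_iff.2 ⟨hp, ?_⟩, ?_⟩
  · refine orderEmbOfFin_unique hA (fun j => ?_) (e.strictMono.comp (Fin.strictMono_succAbove p))
    have hne : e (p.succAbove j) ≠ x := hp ▸ e.injective.ne (Fin.succAbove_ne p j)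
    exact (mem_insert.1 (orderEmbOfFin_mem _ h _)).resolve_left hne
  · have hIoi : {b ∈ insert x A | x < b} = (Ioi p).map e.toEmbedding := by
      conv_lhs => rw [← map_orderEmbOfFin_univ (insert x A) h]
      rw [filter_map, ← filter_lt_eq_Ioi]
      congr 1
      ext j
      simp only [mem_filter, mem_univ, true_and, Function.comp_apply]
      change x < e j ↔ p < j
      rw [← e.lt_iff_lt, hp]
    have hcard := congrArg card hIoi
    rw [filter_insert, if_neg (lt_irrefl x), card_map, Fin.card_Ioi] at hcard
    omega

end Finset

namespace Matrix

variable {R : Type*} [CommRing R] {n : ℕ}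

theorem det_insertNth_row (p : Fin (n + 1)) (w : Fin (n + 1) → R)
    (r : Fin n → Fin (n + 1) → R) :
    det (of (p.insertNth w r)) = (-1) ^ (p : ℕ) * det (of (Fin.cons w r)) := by
  rw [← Fin.cons_comp_cycleRange]
  exact (det_permute p.cycleRange (of (Fin.cons w r))).trans (by simp [Fin.sign_cycleRange])

theorem neg_one_pow_mul_det_insertNth_row {p : Fin (n + 1)} {k : ℕ} (hk : (p : ℕ) + k = n)
    (w : Fin (n + 1) → R) (r : Fin n → Fin (n + 1) → R) :
    (-1) ^ k * det (of (p.insertNth w r)) = det (of (Fin.snoc r w)) := by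
  rw [← Fin.insertNth_last', det_insertNth_row, det_insertNth_row, ← mul_assoc, ← pow_add,
    Fin.val_last, show k + (p : ℕ) = n by omega]

def detSnocRow (r : Fin n → Fin (n + 1) → R) : (Fin (n + 1) → R) →ₗ[R] R :=
  (detRowAlternating (R := R) (n := Fin (n + 1))).toMultilinearMap.toLinearMap (Fin.snoc r 0)
    (Fin.last n)

theorem detSnocRow_apply (r : Fin n → Fin (n + 1) → R) (w : Fin (n + 1) → R) :
    detSnocRow r w = det (of (Fin.snoc r w)) := by
  rw [detSnocRow, MultilinearMap.toLinearMap_apply, Fin.update_snoc_last]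
  rfl

theorem detSnocRow_apply_self (r : Fin n → Fin (n + 1) → R) (j : Fin n) :
    detSnocRow r (r j) = 0 := by
  rw [detSnocRow_apply]
  refine det_zero_of_row_eq (Fin.castSucc_lt_last j).ne ?_
  change (Fin.snoc r (r j) : Fin (n + 1) → Fin (n + 1) → R) (Fin.castSucc j) =
    (Fin.snoc r (r j) : Fin (n + 1) → Fin (n + 1) → R) (Fin.last n)
  simp

theorem detSnocRow_single_last (r : Fin n → Fin (n + 1) → R) :
    detSnocRow r (Pi.single (Fin.last n) 1) = det (of fun i j => r i (Fin.castSucc j)) := by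
  rw [detSnocRow_apply, det_succ_row _ (Fin.last n)]
  simp [Pi.single_apply, Fin.succAbove_last, submatrix]

theorem neg_one_pow_mul_det_orderEmbOfFin_insert {α : Type*} [LinearOrder α]
    (φ : Fin (n + 1) → α → R) {A : Finset α} {x : α} (hA : #A = n)
    (h : #(insert x A) = n + 1) :
    (-1) ^ #{a ∈ A | x < a} * det (of fun i j => φ i ((insert x A).orderEmbOfFin h j)) =
      det (of (Fin.snoc (fun j i => φ i (A.orderEmbOfFin hA j)) fun i => φ i x)) := by
  obtain ⟨p, he, hp⟩ := exists_orderEmbOfFin_insert_eq_insertNth hA h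
  rw [← det_transpose, ← neg_one_pow_mul_det_insertNth_row hp]
  congr 2
  ext j i
  rw [transpose_apply, of_apply, of_apply, he]
  exact Fin.succAboveCases p (by simp) (fun k => by simp) j

end Matrix

theorem summable_mul_of_summable_norm_sq {ι 𝕜 : Type*} [NormedRing 𝕜] [CompleteSpace 𝕜]
    {f g : ι → 𝕜} (hf : Summable fun x => ‖f x‖ ^ 2)
    (hg : Summable fun x => ‖g x‖ ^ 2) :
    Summable fun x => f x * g x :=
  Summable.of_norm_bounded (hf.add hg) fun x => by
    nlinarith [norm_mul_le (f x) (g x), sq_nonneg (‖f x‖ - ‖g x‖), norm_nonneg (f x),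
      norm_nonneg (g x)]

theorem hasSum_conj_smul_of_orthonormal {ι κ : Type*} [Fintype ι] [DecidableEq ι]
    (φ : ι → κ → ℂ) (hl2 : ∀ i, Summable fun x => ‖φ i x‖ ^ 2)
    (horth : ∀ i j, ∑' x, φ i x * starRingEnd ℂ (φ j x) = if i = j then 1 else 0) (j : ι) :
    HasSum (fun x => starRingEnd ℂ (φ j x) • fun i => φ i x) (Pi.single j 1) := by
  refine Pi.hasSum.2 fun i => ?_
  have h := (summable_mul_of_summable_norm_sq (hl2 i)
    (g := fun x => starRingEnd ℂ (φ j x)) (by simpa using hl2 j)).hasSum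
  rw [horth] at h
  simpa [Pi.single_apply, mul_comm] using h

theorem stmt_9 (n : ℕ) (φ : Fin (n + 1) → ℕ → ℂ)
    (hl2 : ∀ i, Summable fun x => ‖φ i x‖ ^ 2)
    (horth : ∀ i j, ∑' x : ℕ, φ i x * (starRingEnd ℂ) (φ j x) = if i = j then 1 else 0)
    (A : Finset ℕ) (hA : A.card = n) :
    HasSum (fun x : {x : ℕ // x ∉ A} =>
        (-1 : ℂ) ^ ((A.filter fun a => (x : ℕ) < a).card) *
          (starRingEnd ℂ) (φ (Fin.last n) (x : ℕ)) *
          Matrix.det (Matrix.of fun i j : Fin (n + 1) =>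
            φ i (((insert (x : ℕ) A).orderIsoOfFin
              (by rw [Finset.card_insert_of_notMem x.2, hA]) j : ℕ))))
      (Matrix.det (Matrix.of fun i j : Fin n =>
        φ (Fin.castSucc i) ((A.orderIsoOfFin hA j : ℕ)))) := by
  set v : ℕ → Fin (n + 1) → ℂ := fun x i => φ i x
  set c : ℕ → ℂ := fun x => starRingEnd ℂ (φ (Fin.last n) x)
  set D := Matrix.detSnocRow fun j => v (A.orderEmbOfFin hA j)
  have hsumA : HasSum (fun x : {x // x ∉ A} => c x • v x)
      (Pi.single (Fin.last n) 1 - ∑ b ∈ A, c b • v b) :=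
    (A.hasSum_compl_iff (f := fun x => c x • v x)).2
      (by rw [sub_add_cancel]; exact hasSum_conj_smul_of_orthonormal φ hl2 horth _)
  have hval : D (Pi.single (Fin.last n) 1 - ∑ b ∈ A, c b • v b) =
      Matrix.det (Matrix.of fun i j : Fin n => φ (Fin.castSucc i) (A.orderIsoOfFin hA j)) := by
    have hD : ∀ b ∈ A, D (v b) = 0 := by
      intro b hb
      obtain ⟨j, rfl⟩ : b ∈ Set.range (A.orderEmbOfFin hA) := by simpa [range_orderEmbOfFin]
      exact Matrix.detSnocRow_apply_self _ j
    rw [map_sub, map_sum, sum_eq_zero fun b hb => by rw [map_smul, hD b hb, smul_zero], sub_zero,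
      Matrix.detSnocRow_single_last, ← Matrix.det_transpose]
    rfl
  rw [← hval]
  refine (hsumA.map D D.continuous_of_finiteDimensional).congr_fun fun x => ?_
  simp only [Function.comp_apply, map_smul, smul_eq_mul, coe_orderIsoOfFin_apply]
  rw [mul_right_comm, Matrix.neg_one_pow_mul_det_orderEmbOfFin_insert φ hA, mul_comm]
  exact congrArg _ (Matrix.detSnocRow_apply _ _).symm
end

section
/- Let E be a countable set, n ≥ 1, let φ : E → ℂ be any function, and let ε : E × 𝒫_n(E) → {+1, −1} be any function, where 𝒫_n(E) is the collection of n-element subsets of E. Let 𝒜 ⊆ 𝒫_n(E) and define the Hermitian matrix 𝓜 with rows and columns indexed by 𝒜 by: 𝓜(A, A) = Σ_{x ∈ A} |φ(x)|²; 𝓜(A, C) = ε(x, A) · ε(y, C) · φ(x) · conj(φ(y)) when |A ∩ C| = n−1, where x is the unique element of A ∖ C and y is the unique element of C ∖ A; and 𝓜(A, C) = 0 otherwise. Then 𝓜 is positive semidefinite: for every finitely supported F : 𝒜 → ℂ, Σ_{A, C ∈ 𝒜} conj(F(A)) · 𝓜(A, C) · F(C) is real and nonnegative. -/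
/-!
Put `g y C = ε(y, C) · conj φ(y)` and let `X = faceCoeff g` be the matrix with rows indexed by the
`(n-1)`-sets `B` and columns by the `n`-sets `C` whose entry is `g y C` if `B = C \ {y}` and `0`
otherwise (a weighted simplicial boundary operator). Two distinct `n`-sets have a common facet
exactly when they meet in `n - 1` points, and the facet is then their intersection; hence
`𝓜 = X* X`, and the quadratic form of `𝓜` at `F` is `∑_B |(X F)(B)|² ≥ 0`.
-/

open Finset
open scoped ComplexOrder FinsetFamily

theorem sum_sum_star_mul_gram_mul_nonneg {R ι κ : Type*} [CommSemiring R] [PartialOrder R]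
    [StarRing R] [StarOrderedRing R] (s : Finset ι) (T : Finset κ) (X : κ → ι → R) (F : ι → R) :
    0 ≤ ∑ A ∈ s, ∑ C ∈ s, star (F A) * (∑ B ∈ T, star (X B A) * X B C) * F C := by
  calc 0 ≤ ∑ B ∈ T, star (∑ A ∈ s, X B A * F A) * ∑ C ∈ s, X B C * F C :=
        sum_nonneg fun B _ => star_mul_self_nonneg _
    _ = ∑ B ∈ T, ∑ A ∈ s, ∑ C ∈ s, star (F A) * (star (X B A) * X B C) * F C := by
        simp only [star_sum, star_mul', sum_mul_sum]
        exact sum_congr rfl fun B _ => sum_congr rfl fun A _ => sum_congr rfl fun C _ => by ring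
    _ = _ := by
        rw [sum_comm]
        simp only [mul_sum, sum_mul]
        exact sum_congr rfl fun A _ => sum_comm

namespace Finset

variable {α : Type*} [DecidableEq α]

theorem notMem_of_erase_eq_erase {A C : Finset α} {x y : α} (hAC : A ≠ C) (hx : x ∈ A)
    (hy : y ∈ C) (h : A.erase x = C.erase y) : x ∉ C := by
  intro hxC
  obtain rfl | hxy := eq_or_ne x y
  · exact hAC (by rw [← insert_erase hx, h, insert_erase hy])
  · exact notMem_erase x A (h ▸ mem_erase.2 ⟨hxy, hxC⟩)

theorem sdiff_eq_singleton_of_erase_eq_erase {A C : Finset α} {x y : α} (hx : x ∈ A)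
    (hxC : x ∉ C) (h : A.erase x = C.erase y) : A \ C = {x} := by
  ext z
  simp only [mem_sdiff, mem_singleton]
  refine ⟨fun ⟨hzA, hzC⟩ => by_contra fun hzx => hzC ?_, ?_⟩
  · exact mem_of_mem_erase (h ▸ mem_erase.2 ⟨hzx, hzA⟩)
  · rintro rfl
    exact ⟨hx, hxC⟩

theorem erase_eq_erase_iff_of_ne {A C : Finset α} {x y : α} (hAC : A ≠ C) (hx : x ∈ A)
    (hy : y ∈ C) : A.erase x = C.erase y ↔ A \ C = {x} ∧ C \ A = {y} := by
  refine ⟨fun h => ⟨?_, ?_⟩, fun ⟨hA, hC⟩ => ?_⟩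
  · exact sdiff_eq_singleton_of_erase_eq_erase hx (notMem_of_erase_eq_erase hAC hx hy h) h
  · exact sdiff_eq_singleton_of_erase_eq_erase hy
      (notMem_of_erase_eq_erase hAC.symm hy hx h.symm) h.symm
  · rw [← sdiff_singleton_eq_erase, ← sdiff_singleton_eq_erase, ← hA, ← hC,
      sdiff_sdiff_self_left, sdiff_sdiff_self_left, inter_comm]

theorem card_sdiff_eq_one_iff {A C : Finset α} {n : ℕ} (hAC : A ≠ C) (hA : A.card = n)
    (hC : C.card = n) : (A \ C).card = 1 ↔ (A ∩ C).card = n - 1 := by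
  have hAC' : ¬ A ⊆ C := fun h => hAC (eq_of_subset_of_card_le h (by omega))
  have := (sdiff_nonempty.2 hAC').card_pos
  have := card_sdiff_add_card_inter A C
  omega

variable {M : Type*} [AddCommMonoid M]

theorem sum_sum_ite_erase_eq_erase_self (A : Finset α) (f : α → α → M) :
    ∑ x ∈ A, ∑ y ∈ A, (if A.erase x = A.erase y then f x y else 0) = ∑ x ∈ A, f x x :=
  sum_congr rfl fun x hx => by simp_rw [erase_inj A hx, sum_ite_eq, if_pos hx]

theorem sum_sum_ite_erase_eq_erase_of_ne {A C : Finset α} {n : ℕ} (hAC : A ≠ C)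
    (hA : A.card = n) (hC : C.card = n) (f : α → α → M) :
    ∑ x ∈ A, ∑ y ∈ C, (if A.erase x = C.erase y then f x y else 0) =
      if (A ∩ C).card = n - 1 then ∑ x ∈ A \ C, ∑ y ∈ C \ A, f x y else 0 := by
  rw [sum_congr rfl fun x hx => sum_congr rfl fun y hy =>
    if_congr (erase_eq_erase_iff_of_ne hAC hx hy) rfl rfl]
  split_ifs with hI
  · obtain ⟨x₀, hx₀⟩ := card_eq_one.1 ((card_sdiff_eq_one_iff hAC hA hC).2 hI)
    obtain ⟨y₀, hy₀⟩ := card_eq_one.1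
      ((card_sdiff_eq_one_iff hAC.symm hC hA).2 (by rwa [inter_comm]))
    have hx₀A : x₀ ∈ A := (mem_sdiff.1 (hx₀ ▸ mem_singleton_self x₀)).1
    have hy₀C : y₀ ∈ C := (mem_sdiff.1 (hy₀ ▸ mem_singleton_self y₀)).1
    simp only [hx₀, hy₀, singleton_inj, ite_and, sum_ite_irrel, sum_const_zero, sum_ite_eq,
      if_pos hx₀A, if_pos hy₀C, sum_singleton]
  · refine sum_eq_zero fun x _ => sum_eq_zero fun y _ => if_neg fun h => hI ?_
    exact (card_sdiff_eq_one_iff hAC hA hC).1 (by rw [h.1, card_singleton])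

end Finset

section Facets

variable {α R : Type*} [DecidableEq α]

def faceCoeff [AddCommMonoid R] (g : α → Finset α → R) (B C : Finset α) : R :=
  ∑ y ∈ C, if C.erase y = B then g y C else 0

theorem sum_shadow_star_faceCoeff_mul_faceCoeff [CommSemiring R] [StarRing R]
    {s : Finset (Finset α)} (g : α → Finset α → R) {A : Finset α} (hA : A ∈ s) (C : Finset α) :
    ∑ B ∈ ∂ s, star (faceCoeff g B A) * faceCoeff g B C =
      ∑ x ∈ A, ∑ y ∈ C, if A.erase x = C.erase y then star (g x A) * g y C else 0 := by
  simp only [faceCoeff, star_sum, sum_mul_sum]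
  rw [sum_comm]
  refine sum_congr rfl fun x hx => ?_
  rw [sum_comm]
  refine sum_congr rfl fun y _ => ?_
  have hxs : A.erase x ∈ ∂ s := mem_shadow_iff.2 ⟨A, hA, x, hx, rfl⟩
  simp only [apply_ite star, star_zero, ite_mul, zero_mul]
  rw [sum_ite_eq, if_pos hxs, mul_ite, mul_zero]
  exact if_congr eq_comm rfl rfl

end Facets

section Lyons

variable {E : Type*} [DecidableEq E]

noncomputable def lyonsMatrix (n : ℕ) (φ : E → ℂ) (ε : E → Finset E → ℝ) (A C : Finset E) : ℂ :=
  if A = C then (∑ x ∈ A, (‖φ x‖ ^ 2 : ℂ))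
  else if (A ∩ C).card = n - 1 then
    ∑ x ∈ A \ C, ∑ y ∈ C \ A,
      (ε x A : ℂ) * (ε y C : ℂ) * φ x * (starRingEnd ℂ) (φ y)
  else 0

theorem lyonsMatrix_eq_sum_shadow {n : ℕ} {φ : E → ℂ} {ε : E → Finset E → ℝ}
    (hε : ∀ x A, ε x A = 1 ∨ ε x A = -1) {s : Finset (Finset E)} {A C : Finset E} (hAs : A ∈ s)
    (hA : A.card = n) (hC : C.card = n) :
    lyonsMatrix n φ ε A C = ∑ B ∈ ∂ s,
      star (faceCoeff (fun y D => ε y D * starRingEnd ℂ (φ y)) B A) *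
        faceCoeff (fun y D => ε y D * starRingEnd ℂ (φ y)) B C := by
  rw [sum_shadow_star_faceCoeff_mul_faceCoeff _ hAs]
  simp only [lyonsMatrix, star_mul', Complex.star_def, Complex.conj_ofReal, Complex.conj_conj]
  split_ifs with hAC hI
  · subst hAC
    rw [sum_sum_ite_erase_eq_erase_self]
    refine sum_congr rfl fun x _ => ?_
    have hε2 : (ε x A : ℂ) ^ 2 = 1 := by rcases hε x A with h | h <;> simp [h]
    rw [← Complex.mul_conj', ← one_mul (φ x * _), ← hε2]
    ring
  · rw [sum_sum_ite_erase_eq_erase_of_ne hAC hA hC, if_pos hI]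
    exact sum_congr rfl fun x _ => sum_congr rfl fun y _ => by ring
  · rw [sum_sum_ite_erase_eq_erase_of_ne hAC hA hC, if_neg hI]

end Lyons

theorem stmt_10_general {E : Type*} [DecidableEq E] (n : ℕ)
    (φ : E → ℂ) (ε : E → Finset E → ℝ) (hε : ∀ x A, ε x A = 1 ∨ ε x A = -1)
    (𝒜 : Set (Finset E)) (h𝒜 : ∀ A ∈ 𝒜, A.card = n)
    (M : Finset E → Finset E → ℂ)
    (hM : ∀ A ∈ 𝒜, ∀ C ∈ 𝒜, M A C =
      if A = C then (∑ x ∈ A, (‖φ x‖ ^ 2 : ℂ))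
      else if (A ∩ C).card = n - 1 then
        ∑ x ∈ A \ C, ∑ y ∈ C \ A,
          (ε x A : ℂ) * (ε y C : ℂ) * φ x * (starRingEnd ℂ) (φ y)
      else 0)
    (F : Finset E → ℂ) (hF0 : ∀ A ∉ 𝒜, F A = 0)
    (s : Finset (Finset E)) :
    0 ≤ (∑ A ∈ s, ∑ C ∈ s, (starRingEnd ℂ) (F A) * M A C * F C).re ∧
      (∑ A ∈ s, ∑ C ∈ s, (starRingEnd ℂ) (F A) * M A C * F C).im = 0 := by
  set X := faceCoeff fun y D => (ε y D : ℂ) * starRingEnd ℂ (φ y)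
  have hterm : ∀ A ∈ s, ∀ C ∈ s, starRingEnd ℂ (F A) * M A C * F C =
      star (F A) * (∑ B ∈ ∂ s, star (X B A) * X B C) * F C := by
    intro A hAs C _
    by_cases hA : A ∈ 𝒜
    · by_cases hC : C ∈ 𝒜
      · rw [hM A hA C hC, ← lyonsMatrix, lyonsMatrix_eq_sum_shadow hε hAs (h𝒜 A hA) (h𝒜 C hC)]
        rfl
      · simp [hF0 C hC]
    · simp [hF0 A hA]
  have hQ := sum_sum_star_mul_gram_mul_nonneg s (∂ s) X F
  rw [← sum_congr rfl fun A hA => sum_congr rfl fun C hC => hterm A hA C hC] at hQ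
  obtain ⟨hre, him⟩ := Complex.nonneg_iff.1 hQ
  exact ⟨hre, him.symm⟩

theorem stmt_10 {E : Type*} [Countable E] [DecidableEq E] (n : ℕ) (hn : 1 ≤ n)
    (φ : E → ℂ) (ε : E → Finset E → ℝ) (hε : ∀ x A, ε x A = 1 ∨ ε x A = -1)
    (𝒜 : Set (Finset E)) (h𝒜 : ∀ A ∈ 𝒜, A.card = n)
    (M : Finset E → Finset E → ℂ)
    (hM : ∀ A ∈ 𝒜, ∀ C ∈ 𝒜, M A C =
      if A = C then (∑ x ∈ A, (‖φ x‖ ^ 2 : ℂ))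
      else if (A ∩ C).card = n - 1 then
        ∑ x ∈ A \ C, ∑ y ∈ C \ A,
          (ε x A : ℂ) * (ε y C : ℂ) * φ x * (starRingEnd ℂ) (φ y)
      else 0)
    (F : Finset E → ℂ) (hF0 : ∀ A ∉ 𝒜, F A = 0)
    (s : Finset (Finset E)) (hs : {A | F A ≠ 0} ⊆ ↑s) :
    0 ≤ (∑ A ∈ s, ∑ C ∈ s, (starRingEnd ℂ) (F A) * M A C * F C).re ∧
      (∑ A ∈ s, ∑ C ∈ s, (starRingEnd ℂ) (F A) * M A C * F C).im = 0 :=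
  stmt_10_general n φ ε hε 𝒜 h𝒜 M hM F hF0 s
end

section
/- Let (E, ℱ, μ) be a measure space and let φ_1, …, φ_{n+1} : E → ℂ be measurable functions that are orthonormal, i.e. ∫_E φ_i(x) · conj(φ_j(x)) dμ(x) = δ_{ij} for all 1 ≤ i, j ≤ n+1. Then for every (x_1, …, x_n) ∈ E^n, ∫_E conj(φ_{n+1}(t)) · det((φ_i(z_j))_{1 ≤ i,j ≤ n+1}) dμ(t) = det((φ_i(x_j))_{1 ≤ i,j ≤ n}), where (z_1, …, z_{n+1}) = (x_1, …, x_n, t). -/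
/-!
Only the last column of the integrand's matrix depends on `t`, and the determinant is linear in
that column, so the integral passes inside it. By orthonormality the integrated column
`(∫ φ_i conj φ_{n+1})_i` is the last unit vector, whose cofactor is the `n × n` minor.
-/

open MeasureTheory Matrix

namespace MeasureTheory

variable {α 𝕜 : Type*} [MeasurableSpace α] {μ : Measure α} [RCLike 𝕜] {f g : α → 𝕜}

theorem memLp_two_of_integral_mul_conj_ne_zero (hf : AEStronglyMeasurable f μ)
    (h : ∫ x, f x * starRingEnd 𝕜 (f x) ∂μ ≠ 0) : MemLp f 2 μ := by
  rw [memLp_two_iff_integrable_sq_norm hf]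
  have := (Integrable.of_integral_ne_zero h).re
  simpa only [RCLike.mul_conj, ← RCLike.ofReal_pow, RCLike.ofReal_re] using this

theorem MemLp.integrable_mul_conj_s11 (hf : MemLp f 2 μ) (hg : MemLp g 2 μ) :
    Integrable (fun x => f x * starRingEnd 𝕜 (g x)) μ :=
  hf.integrable_mul hg.star

end MeasureTheory

namespace Matrix

variable {ι 𝕜 α : Type*} [Fintype ι] [DecidableEq ι] [RCLike 𝕜] [MeasurableSpace α]
  {μ : Measure α}

theorem integral_det_updateCol (A : Matrix ι ι 𝕜) (j : ι) {v : α → ι → 𝕜}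
    (hv : ∀ i, Integrable (v · i) μ) :
    ∫ t, (A.updateCol j (v t)).det ∂μ = (A.updateCol j fun i => ∫ t, v t i ∂μ).det := by
  let L : (ι → 𝕜) →L[𝕜] 𝕜 := (LinearMap.proj j ∘ₗ cramer A).toContinuousLinearMap
  have hL : ∀ w, L w = (A.updateCol j w).det := fun w => cramer_apply A w j
  simp_rw [← hL, L.integral_comp_comm (Integrable.of_eval hv)]
  congr 1
  ext i
  exact eval_integral hv i

theorem det_updateCol_last_single {R : Type*} [CommRing R] {n : ℕ}
    (A : Matrix (Fin (n + 1)) (Fin (n + 1)) R) :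
    (A.updateCol (Fin.last n) (Pi.single (Fin.last n) 1)).det =
      (A.submatrix Fin.castSucc Fin.castSucc).det := by
  rw [← det_transpose, ← updateRow_transpose, ← adjugate_apply, adjugate_fin_succ_eq_det_submatrix,
    Fin.succAbove_last, ← transpose_submatrix, det_transpose]
  simp [← two_mul, pow_mul]

end Matrix

theorem stmt_11_general {E : Type*} [MeasurableSpace E] (μ : Measure E)
    (n : ℕ) (φ : Fin (n + 1) → E → ℂ) (hmeas : ∀ i, Measurable (φ i))
    (horth : ∀ i j, ∫ x, φ i x * (starRingEnd ℂ) (φ j x) ∂μ = if i = j then 1 else 0)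
    (x : Fin n → E) :
    ∫ t, (starRingEnd ℂ) (φ (Fin.last n) t) *
        Matrix.det (Matrix.of fun i j : Fin (n + 1) =>
          φ i ((Fin.snoc x t : Fin (n + 1) → E) j)) ∂μ
      = Matrix.det (Matrix.of fun i j : Fin n => φ (Fin.castSucc i) (x j)) := by
  have hL2 (i : Fin (n + 1)) : MemLp (φ i) 2 μ :=
    memLp_two_of_integral_mul_conj_ne_zero (hmeas i).aestronglyMeasurable (by simp [horth])
  let A : Matrix (Fin (n + 1)) (Fin (n + 1)) ℂ := of fun i => Fin.snoc (fun j => φ i (x j)) 0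
  have hcol (t : E) : (of fun i j => φ i ((Fin.snoc x t : Fin (n + 1) → E) j)) =
      A.updateCol (Fin.last n) fun i => φ i t := by
    ext i j
    induction j using Fin.lastCases <;> simp [A]
  calc _ = ∫ t, (A.updateCol (Fin.last n) fun i =>
          φ i t * starRingEnd ℂ (φ (Fin.last n) t)).det ∂μ := by
        congr 1 with t
        rw [hcol, ← det_updateCol_smul]
        congr 2 with i
        exact mul_comm _ _
    _ = (A.updateCol (Fin.last n) (Pi.single (Fin.last n) 1)).det := by
      rw [integral_det_updateCol A _ fun i => (hL2 i).integrable_mul_conj_s11 (hL2 _)]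
      congr 2 with i
      rw [horth, Pi.single_apply]
    _ = _ := by
      rw [det_updateCol_last_single]
      congr 1 with i j
      simp [A]

theorem stmt_11 {E : Type*} [MeasurableSpace E] (μ : Measure E) [SigmaFinite μ]
    (n : ℕ) (φ : Fin (n + 1) → E → ℂ) (hmeas : ∀ i, Measurable (φ i))
    (horth : ∀ i j, ∫ x, φ i x * (starRingEnd ℂ) (φ j x) ∂μ = if i = j then 1 else 0)
    (x : Fin n → E) :
    ∫ t, (starRingEnd ℂ) (φ (Fin.last n) t) *
        Matrix.det (Matrix.of fun i j : Fin (n + 1) =>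
          φ i ((Fin.snoc x t : Fin (n + 1) → E) j)) ∂μ
      = Matrix.det (Matrix.of fun i j : Fin n => φ (Fin.castSucc i) (x j)) :=
  stmt_11_general μ n φ hmeas horth x
end

section
/- Let E be a set with a linear (total) order ≤ and a sigma-algebra, let μ be a probability measure on E, and let h : E → [0, ∞) be a measurable increasing function (x ≤ y implies h(x) ≤ h(y)) with ∫_E h dμ = 1. Then for every measurable increasing subset 𝒜 ⊆ E (meaning: if x ∈ 𝒜 and x ≤ y then y ∈ 𝒜), μ(𝒜) ≤ ∫_𝒜 h dμ. -/
/-!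
Since the order is total, every point outside an upper set `𝒜` lies below every
point of `𝒜`, so a monotone density `h` is either `≥ 1` on all of `𝒜` or `≤ 1` on all
of `𝒜ᶜ`. In the first case `μ 𝒜 ≤ ∫_𝒜 h` directly; in the second `∫_{𝒜ᶜ} h ≤ μ 𝒜ᶜ`,
and subtracting from `∫ h = 1 = μ univ` gives the claim.
-/

open MeasureTheory

theorem IsUpperSet.forall_le_or_forall_compl_le_of_monotone {α β : Type*} [LinearOrder α]
    [LinearOrder β] {s : Set α} (hs : IsUpperSet s) {f : α → β} (hf : Monotone f) (c : β) :
    (∀ x ∈ s, c ≤ f x) ∨ ∀ y ∈ sᶜ, f y ≤ c := by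
  by_contra! ⟨⟨x, hxs, hfx⟩, y, hys, hfy⟩
  have hyx : y < x := lt_of_not_ge fun hxy => hys (hs hxy hxs)
  exact (hf hyx.le).not_gt (hfx.trans hfy)

theorem measureReal_le_setIntegral_of_forall_compl_le_one {α : Type*} [MeasurableSpace α]
    {μ : Measure α} [IsProbabilityMeasure μ] {f : α → ℝ} (hf : ∫ x, f x ∂μ = 1)
    {s : Set α} (hs : MeasurableSet s) (hle : ∀ y ∈ sᶜ, f y ≤ 1) :
    μ.real s ≤ ∫ x in s, f x ∂μ := by
  have hint : Integrable f μ := .of_integral_ne_zero (hf ▸ one_ne_zero)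
  have hcompl : ∫ x in sᶜ, f x ∂μ ≤ μ.real sᶜ := by
    simpa using setIntegral_mono_on hint.integrableOn (integrable_const 1) hs.compl hle
  have hsplit := integral_add_compl hs hint
  have hmsplit := measureReal_add_measureReal_compl (μ := μ) hs
  rw [probReal_univ] at hmsplit
  linarith

theorem stmt_14_general {E : Type*} [MeasurableSpace E] [LinearOrder E]
    (μ : Measure E) [IsProbabilityMeasure μ]
    (h : E → ℝ) (hmono : Monotone h)
    (h1 : ∫ x, h x ∂μ = 1)
    (𝒜 : Set E) (h𝒜m : MeasurableSet 𝒜)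
    (h𝒜inc : ∀ x ∈ 𝒜, ∀ y, x ≤ y → y ∈ 𝒜) :
    (μ 𝒜).toReal ≤ ∫ x in 𝒜, h x ∂μ := by
  have h𝒜 : IsUpperSet 𝒜 := fun x y hxy hx => h𝒜inc x hx y hxy
  rcases h𝒜.forall_le_or_forall_compl_le_of_monotone hmono 1 with hge | hle
  · have hint : Integrable h μ := .of_integral_ne_zero (h1 ▸ one_ne_zero)
    simpa [measureReal_def] using
      setIntegral_ge_of_const_le_real h𝒜m (measure_ne_top μ 𝒜) hge hint.integrableOn
  · exact measureReal_le_setIntegral_of_forall_compl_le_one h1 h𝒜m hle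

theorem stmt_14 {E : Type*} [MeasurableSpace E] [LinearOrder E]
    (μ : Measure E) [IsProbabilityMeasure μ]
    (h : E → ℝ) (hmeas : Measurable h) (h0 : ∀ x, 0 ≤ h x) (hmono : Monotone h)
    (h1 : ∫ x, h x ∂μ = 1)
    (𝒜 : Set E) (h𝒜m : MeasurableSet 𝒜)
    (h𝒜inc : ∀ x ∈ 𝒜, ∀ y, x ≤ y → y ∈ 𝒜) :
    (μ 𝒜).toReal ≤ ∫ x in 𝒜, h x ∂μ :=
  stmt_14_general μ h hmono h1 𝒜 h𝒜m h𝒜inc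
end

section
/- Let μ be a finite Borel measure on [0, ∞) such that there exists a function f : [0, ∞) → [0, ∞) with μ(y + A) = f(y)·μ(A) for every y ≥ 0 and every Borel set A ⊆ [0, ∞), where y + A = {y + a : a ∈ A}. Fix n ≥ 1, let X^{∧n} = {x ∈ [0,∞)^n : x_1 < x_2 < ⋯ < x_n}, and let Δ(x) = ∏_{1 ≤ i < j ≤ n} (x_j − x_i). Let H : X^{∧n} → [0, ∞) be a measurable increasing function (increasing with respect to the componentwise partial order on X^{∧n}), and suppose the normalizations ∫_{X^{∧n}} Δ(x)² dμ^{⊗n}(x) = 1 and ∫_{X^{∧n}} Δ(x)² H(x) dμ^{⊗n}(x) = 1 hold, defining probability measures P_1 and P_2 on X^{∧n} by dP_1(x) = Δ(x)² ∏_i dμ(x_i) and dP_2(x) = Δ(x)² H(x) ∏_i dμ(x_i). Then for every measurable increasing set 𝒜 ⊆ X^{∧n} (if x ∈ 𝒜 and y ∈ X^{∧n} satisfies x_i ≤ y_i for all i, then y ∈ 𝒜), P_1(𝒜) ≤ P_2(𝒜). -/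
/-!
Holley's inequality, in the continuous setting: if two densities `p`, `q` with respect to a
product measure satisfy `p x * q y ≤ q (x ⊔ y) * p (x ⊓ y)`, then `q` puts more mass than `p`
on every increasing set. This follows from the Ahlswede–Daykin four functions inequality for
product measures, proved one coordinate at a time: on a linearly ordered factor it reduces,
after symmetrizing the double integral, to the two-point inequality `a + b ≤ c + d` whenever
`a, b ≤ d` and `a * b ≤ c * d`.

Here the densities are `Δ²` and `Δ² H` restricted to the ordered chamber, which is a sublattice.
The log-supermodularity of `Δ²` comes from the factorwise inequality
`(b - a) * (d - c) ≤ (b ⊔ d - a ⊔ c) * (b ⊓ d - a ⊓ c)`, and `H` is increasing.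
-/

open MeasureTheory Set
open scoped ENNReal NNReal

theorem ENNReal.add_le_add_of_mul_le_mul {a b c d : ℝ≥0∞} (ha : a ≤ d) (hb : b ≤ d)
    (h : a * b ≤ c * d) : a + b ≤ c + d := by
  rcases eq_or_ne d ⊤ with rfl | hd
  · simp
  rcases eq_or_ne c ⊤ with rfl | hc
  · simp
  lift d to ℝ≥0 using hd
  lift c to ℝ≥0 using hc
  lift a to ℝ≥0 using ne_top_of_le_ne_top coe_ne_top ha
  lift b to ℝ≥0 using ne_top_of_le_ne_top coe_ne_top hb
  norm_cast at *
  rw [← NNReal.coe_le_coe] at *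
  push_cast at *
  rcases (NNReal.coe_nonneg d).eq_or_lt with hd0 | hd0
  · nlinarith [a.coe_nonneg, b.coe_nonneg, c.coe_nonneg]
  · -- `(d - a) * (d - b) ≥ 0` gives `(a + b) * d ≤ d * d + a * b ≤ (c + d) * d`
    nlinarith [mul_nonneg (sub_nonneg.2 ha) (sub_nonneg.2 hb)]

section FourFunctions

variable {α : Type*}

theorem Fin.cons_sup_cons [Lattice α] {n : ℕ} (a b : α) (u v : Fin n → α) :
    (Fin.cons a u : Fin (n + 1) → α) ⊔ Fin.cons b v = Fin.cons (a ⊔ b) (u ⊔ v) := by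
  ext j; cases j using Fin.cases <;> rfl

theorem Fin.cons_inf_cons [Lattice α] {n : ℕ} (a b : α) (u v : Fin n → α) :
    (Fin.cons a u : Fin (n + 1) → α) ⊓ Fin.cons b v = Fin.cons (a ⊓ b) (u ⊓ v) := by
  ext j; cases j using Fin.cases <;> rfl

variable [MeasurableSpace α] (μ : Measure α)

@[fun_prop]
theorem Measurable.fin_cons {β : Type*} [MeasurableSpace β] {n : ℕ} {f : β → α}
    {g : β → Fin n → α} (hf : Measurable f) (hg : Measurable g) :
    Measurable fun b => (Fin.cons (f b) (g b) : Fin (n + 1) → α) :=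
  measurable_pi_lambda _ fun j => by
    cases j using Fin.cases
    · simpa using hf
    · simpa using hg.eval

theorem lintegral_pi_fin_succ [SigmaFinite μ] {n : ℕ} {u : (Fin (n + 1) → α) → ℝ≥0∞}
    (hu : Measurable u) :
    ∫⁻ x, u x ∂Measure.pi (fun _ => μ) =
      ∫⁻ a, ∫⁻ w, u (Fin.cons a w) ∂Measure.pi (fun _ => μ) ∂μ := by
  rw [← ((measurePreserving_piFinSuccAbove (fun _ : Fin (n + 1) => μ) 0).symm).lintegral_comp hu,
    lintegral_prod _ (by fun_prop)]
  simp only [MeasurableEquiv.piFinSuccAbove_symm_apply, Fin.insertNthEquiv_zero]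
  rfl

variable [LinearOrder α]

theorem lintegral_mul_lintegral_le_of_le_sup_mul_inf [SFinite μ] {f g h k : α → ℝ≥0∞}
    (hf : Measurable f) (hg : Measurable g) (hh : Measurable h) (hk : Measurable k)
    (hfg : ∀ x y, f x * g y ≤ h (x ⊔ y) * k (x ⊓ y)) :
    (∫⁻ x, f x ∂μ) * (∫⁻ x, g x ∂μ) ≤ (∫⁻ x, h x ∂μ) * (∫⁻ x, k x ∂μ) := by
  have symmetrized : ∀ x y, f x * g y + f y * g x ≤ h x * k y + h y * k x := by
    intro x y
    wlog hxy : x ≤ y generalizing x y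
    · rw [add_comm, add_comm (h x * k y)]
      exact this y x (le_of_not_ge hxy)
    refine ENNReal.add_le_add_of_mul_le_mul ?_ ?_ ?_
    · simpa [hxy] using hfg x y
    · simpa [hxy] using hfg y x
    · calc f x * g y * (f y * g x) = (f x * g x) * (f y * g y) := by ring
        _ ≤ (h x * k x) * (h y * k y) :=
          mul_le_mul' (by simpa using hfg x x) (by simpa using hfg y y)
        _ = h x * k y * (h y * k x) := by ring
  have two_mul_eq : ∀ u v : α → ℝ≥0∞, Measurable u → Measurable v →
      2 * ((∫⁻ x, u x ∂μ) * ∫⁻ x, v x ∂μ) = ∫⁻ p, u p.1 * v p.2 + u p.2 * v p.1 ∂μ.prod μ := by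
    intro u v hu hv
    have hswap := lintegral_prod_swap (fun p : α × α => u p.1 * v p.2) (μ := μ) (ν := μ)
    simp only [Prod.fst_swap, Prod.snd_swap] at hswap
    rw [lintegral_add_left (by fun_prop), hswap, ← two_mul,
      lintegral_prod_mul hu.aemeasurable hv.aemeasurable]
  refine (ENNReal.mul_le_mul_iff_right two_ne_zero ENNReal.ofNat_ne_top).1 ?_
  rw [two_mul_eq f g hf hg, two_mul_eq h k hh hk]
  exact lintegral_mono fun p => symmetrized p.1 p.2

variable [SigmaFinite μ] {n : ℕ}

theorem lintegral_pi_mul_lintegral_le_of_le_sup_mul_inf {f g h k : (Fin n → α) → ℝ≥0∞}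
    (hf : Measurable f) (hg : Measurable g) (hh : Measurable h) (hk : Measurable k)
    (hfg : ∀ x y, f x * g y ≤ h (x ⊔ y) * k (x ⊓ y)) :
    (∫⁻ x, f x ∂Measure.pi fun _ => μ) * (∫⁻ x, g x ∂Measure.pi fun _ => μ) ≤
      (∫⁻ x, h x ∂Measure.pi fun _ => μ) * (∫⁻ x, k x ∂Measure.pi fun _ => μ) := by
  induction n with
  | zero =>
    simp only [Measure.pi_of_empty (fun _ : Fin 0 => μ) finZeroElim, lintegral_dirac]
    convert hfg finZeroElim finZeroElim using 3
  | succ n ih =>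
    rw [lintegral_pi_fin_succ μ hf, lintegral_pi_fin_succ μ hg, lintegral_pi_fin_succ μ hh,
      lintegral_pi_fin_succ μ hk]
    refine lintegral_mul_lintegral_le_of_le_sup_mul_inf μ ?_ ?_ ?_ ?_ fun a b => ?_
    any_goals exact Measurable.lintegral_prod_right (by fun_prop)
    refine ih (by fun_prop) (by fun_prop) (by fun_prop) (by fun_prop) fun u v => ?_
    simpa [Fin.cons_sup_cons, Fin.cons_inf_cons] using hfg (Fin.cons a u) (Fin.cons b v)

theorem lintegral_pi_holley {p q : (Fin n → α) → ℝ≥0∞} {A : Set (Fin n → α)}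
    (hp : Measurable p) (hq : Measurable q) (hA : MeasurableSet A)
    (hpq : ∀ x y, p x * q y ≤ q (x ⊔ y) * p (x ⊓ y))
    (hAq : ∀ x ∈ A, ∀ y, x ≤ y → q y ≠ 0 → y ∈ A) :
    (∫⁻ x in A, p x ∂Measure.pi fun _ => μ) * (∫⁻ x, q x ∂Measure.pi fun _ => μ) ≤
      (∫⁻ x in A, q x ∂Measure.pi fun _ => μ) * (∫⁻ x, p x ∂Measure.pi fun _ => μ) := by
  simp only [← lintegral_indicator hA]
  refine lintegral_pi_mul_lintegral_le_of_le_sup_mul_inf μ (hp.indicator hA) hq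
    (hq.indicator hA) hp fun x y => ?_
  by_cases hx : x ∈ A
  · have hsup : A.indicator q (x ⊔ y) = q (x ⊔ y) := by
      by_cases hq0 : q (x ⊔ y) = 0
      · simp [hq0]
      · exact indicator_of_mem (hAq x hx _ le_sup_left hq0) q
    rw [indicator_of_mem hx, hsup]
    exact hpq x y
  · simp [hx]

theorem setIntegral_pi_le_of_holley {p q : (Fin n → α) → ℝ} {A : Set (Fin n → α)}
    (hp0 : 0 ≤ p) (hq0 : 0 ≤ q) (hp : Measurable p) (hq : Measurable q)
    (hp1 : ∫ x, p x ∂Measure.pi (fun _ => μ) = 1) (hq1 : ∫ x, q x ∂Measure.pi (fun _ => μ) = 1)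
    (hA : MeasurableSet A) (hpq : ∀ x y, p x * q y ≤ q (x ⊔ y) * p (x ⊓ y))
    (hAq : ∀ x ∈ A, ∀ y, x ≤ y → q y ≠ 0 → y ∈ A) :
    ∫ x in A, p x ∂Measure.pi (fun _ => μ) ≤ ∫ x in A, q x ∂Measure.pi (fun _ => μ) := by
  have hpi : Integrable p (Measure.pi fun _ => μ) := .of_integral_ne_zero (by simp [hp1])
  have hqi : Integrable q (Measure.pi fun _ => μ) := .of_integral_ne_zero (by simp [hq1])
  have key := lintegral_pi_holley μ hp.ennreal_ofReal hq.ennreal_ofReal hA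
    (fun x y => by
      rw [← ENNReal.ofReal_mul (hp0 x), ← ENNReal.ofReal_mul (hq0 _)]
      exact ENNReal.ofReal_le_ofReal (hpq x y))
    (fun x hx y hxy hy => hAq x hx y hxy fun h => hy (by simp [h]))
  rw [← ofReal_integral_eq_lintegral_ofReal hpi (ae_of_all _ hp0),
    ← ofReal_integral_eq_lintegral_ofReal hqi (ae_of_all _ hq0),
    ← ofReal_integral_eq_lintegral_ofReal hpi.integrableOn (ae_of_all _ hp0),
    ← ofReal_integral_eq_lintegral_ofReal hqi.integrableOn (ae_of_all _ hq0), hp1, hq1] at key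
  simpa [ENNReal.ofReal_le_ofReal_iff (setIntegral_nonneg hA fun x _ => hq0 x)] using key

end FourFunctions

section Sublattice

variable {β R : Type*} [Lattice β]

theorem isSublattice_Ici (a : β) : IsSublattice (Ici a) :=
  ⟨(isUpperSet_Ici a).supClosed, fun _ hx _ hy => le_inf hx hy⟩

theorem isSublattice_setOf_strictMono {ι : Type*} [Preorder ι] [LinearOrder R] :
    IsSublattice {x : ι → R | StrictMono x} :=
  ⟨fun _ hx _ hy _ _ hij => max_lt_max (hx hij) (hy hij),
    fun _ hx _ hy _ _ hij => min_lt_min (hx hij) (hy hij)⟩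

theorem IsSublattice.indicator_mul_indicator_le [Semiring R] [PartialOrder R] [IsOrderedRing R]
    {W : Set β} (hW : IsSublattice W) {P Q : β → R} (hP : 0 ≤ P) (hQ : 0 ≤ Q)
    (h : ∀ x ∈ W, ∀ y ∈ W, P x * Q y ≤ Q (x ⊔ y) * P (x ⊓ y)) (x y : β) :
    W.indicator P x * W.indicator Q y ≤ W.indicator Q (x ⊔ y) * W.indicator P (x ⊓ y) := by
  by_cases hxy : x ∈ W ∧ y ∈ W
  · obtain ⟨hx, hy⟩ := hxy
    rw [indicator_of_mem hx, indicator_of_mem hy, indicator_of_mem (hW.supClosed hx hy),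
      indicator_of_mem (hW.infClosed hx hy)]
    exact h x hx y hy
  · have hzero : W.indicator P x * W.indicator Q y = 0 := by
      rcases not_and_or.1 hxy with hx | hy <;> simp [*]
    rw [hzero]
    exact mul_nonneg (indicator_nonneg (fun z _ => hQ z) _) (indicator_nonneg (fun z _ => hP z) _)

end Sublattice

theorem measurableSet_setOf_strictMono {ι R : Type*} [Countable ι] [Preorder ι] [LinearOrder R]
    [TopologicalSpace R] [OrderClosedTopology R] [SecondCountableTopology R] [MeasurableSpace R]
    [OpensMeasurableSpace R] : MeasurableSet {x : ι → R | StrictMono x} :=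
  measurableSet_setOfPred.2 <| Measurable.forall fun i => Measurable.forall fun j =>
    measurable_const.imp <| measurableSet_setOfPred.1 <|
      measurableSet_lt (measurable_pi_apply i) (measurable_pi_apply j)

section Vandermonde

variable {R : Type*} [CommRing R] [LinearOrder R] [IsStrictOrderedRing R]

theorem sub_mul_sub_le_sup_sub_sup_mul_inf_sub_inf (a b c d : R) :
    (b - a) * (d - c) ≤ (b ⊔ d - a ⊔ c) * (b ⊓ d - a ⊓ c) := by
  rcases le_total a c with h₁ | h₁ <;> rcases le_total b d with h₂ | h₂ <;>
    simp only [sup_of_le_left, sup_of_le_right, inf_of_le_left, inf_of_le_right, h₁, h₂] <;>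
    nlinarith

variable {n : ℕ} {x y : Fin n → R}

theorem det_vandermonde_nonneg (hx : Monotone x) : 0 ≤ (Matrix.vandermonde x).det := by
  rw [Matrix.det_vandermonde]
  exact Finset.prod_nonneg fun i _ => Finset.prod_nonneg fun j hj =>
    sub_nonneg.2 (hx (Finset.mem_Ioi.1 hj).le)

theorem det_vandermonde_mul_le (hx : Monotone x) (hy : Monotone y) :
    (Matrix.vandermonde x).det * (Matrix.vandermonde y).det ≤
      (Matrix.vandermonde (x ⊔ y)).det * (Matrix.vandermonde (x ⊓ y)).det := by
  simp only [Matrix.det_vandermonde, ← Finset.prod_mul_distrib]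
  refine Finset.prod_le_prod (fun i _ => Finset.prod_nonneg fun j hj => ?_)
    fun i _ => Finset.prod_le_prod (fun j hj => ?_) fun j _ => ?_
  all_goals first
    | exact sub_mul_sub_le_sup_sub_sup_mul_inf_sub_inf _ _ _ _
    | have hij := (Finset.mem_Ioi.1 hj).le
      exact mul_nonneg (sub_nonneg.2 (hx hij)) (sub_nonneg.2 (hy hij))

theorem sq_det_vandermonde_mul_le (hx : Monotone x) (hy : Monotone y) :
    (Matrix.vandermonde x).det ^ 2 * (Matrix.vandermonde y).det ^ 2 ≤
      (Matrix.vandermonde (x ⊔ y)).det ^ 2 * (Matrix.vandermonde (x ⊓ y)).det ^ 2 := by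
  simpa only [mul_pow] using pow_le_pow_left₀
    (mul_nonneg (det_vandermonde_nonneg hx) (det_vandermonde_nonneg hy))
    (det_vandermonde_mul_le hx hy) 2

end Vandermonde

theorem stmt_15_general (μ : Measure ℝ) [IsFiniteMeasure μ]
    (n : ℕ)
    (W : Set (Fin n → ℝ)) (hW : W = {x | (∀ i, 0 ≤ x i) ∧ StrictMono x})
    (Δ : (Fin n → ℝ) → ℝ)
    (hΔ : ∀ x, Δ x = ∏ i : Fin n, ∏ j ∈ Finset.Ioi i, (x j - x i))
    (H : (Fin n → ℝ) → ℝ) (hHmeas : Measurable H) (hH0 : ∀ x, 0 ≤ H x)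
    (hHmono : ∀ x ∈ W, ∀ y ∈ W, (∀ i, x i ≤ y i) → H x ≤ H y)
    (hnorm1 : ∫ x in W, (Δ x) ^ 2 ∂(Measure.pi fun _ : Fin n => μ) = 1)
    (hnorm2 : ∫ x in W, (Δ x) ^ 2 * H x ∂(Measure.pi fun _ : Fin n => μ) = 1)
    (𝒜 : Set (Fin n → ℝ)) (h𝒜m : MeasurableSet 𝒜) (h𝒜W : 𝒜 ⊆ W)
    (h𝒜inc : ∀ x ∈ 𝒜, ∀ y ∈ W, (∀ i, x i ≤ y i) → y ∈ 𝒜) :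
    ∫ x in 𝒜, (Δ x) ^ 2 ∂(Measure.pi fun _ : Fin n => μ)
      ≤ ∫ x in 𝒜, (Δ x) ^ 2 * H x ∂(Measure.pi fun _ : Fin n => μ) := by
  have hWm : MeasurableSet W := hW ▸ measurableSet_Ici.inter measurableSet_setOf_strictMono
  have hWlat : IsSublattice W := hW ▸ (isSublattice_Ici 0).inter isSublattice_setOf_strictMono
  have hΔm : Measurable Δ := by rw [funext hΔ]; fun_prop
  have hdens : ∀ x ∈ W, ∀ y ∈ W,
      Δ x ^ 2 * (Δ y ^ 2 * H y) ≤ Δ (x ⊔ y) ^ 2 * H (x ⊔ y) * Δ (x ⊓ y) ^ 2 := by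
    intro x hx y hy
    have hV := sq_det_vandermonde_mul_le (hW ▸ hx).2.monotone (hW ▸ hy).2.monotone
    simp only [Matrix.det_vandermonde, ← hΔ] at hV
    calc Δ x ^ 2 * (Δ y ^ 2 * H y) = Δ x ^ 2 * Δ y ^ 2 * H y := by ring
      _ ≤ Δ (x ⊔ y) ^ 2 * Δ (x ⊓ y) ^ 2 * H (x ⊔ y) :=
        mul_le_mul hV (hHmono y hy _ (hWlat.supClosed hx hy) fun i => le_sup_right) (hH0 y)
          (by positivity)
      _ = Δ (x ⊔ y) ^ 2 * H (x ⊔ y) * Δ (x ⊓ y) ^ 2 := by ring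
  have hP : 0 ≤ fun x => Δ x ^ 2 := fun x => sq_nonneg _
  have hQ : 0 ≤ fun x => Δ x ^ 2 * H x := fun x => mul_nonneg (sq_nonneg _) (hH0 x)
  have key := setIntegral_pi_le_of_holley μ (indicator_nonneg (fun x _ => hP x))
    (indicator_nonneg (fun x _ => hQ x)) ((hΔm.pow_const 2).indicator hWm)
    (((hΔm.pow_const 2).mul hHmeas).indicator hWm) ((integral_indicator hWm).trans hnorm1)
    ((integral_indicator hWm).trans hnorm2) h𝒜m (hWlat.indicator_mul_indicator_le hP hQ hdens)
    fun x hx y hxy hy => h𝒜inc x hx y (mem_of_indicator_ne_zero hy) hxy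
  rwa [setIntegral_indicator hWm, setIntegral_indicator hWm, inter_eq_left.2 h𝒜W] at key

theorem stmt_15 (μ : Measure ℝ) [IsFiniteMeasure μ] (hsupp : μ (Set.Iio 0) = 0)
    (f : ℝ → ℝ) (hf0 : ∀ y, 0 ≤ f y)
    (htrans : ∀ y : ℝ, 0 ≤ y → ∀ A : Set ℝ, MeasurableSet A → A ⊆ Set.Ici 0 →
      μ ((fun a => y + a) '' A) = ENNReal.ofReal (f y) * μ A)
    (n : ℕ) (hn : 1 ≤ n)
    (W : Set (Fin n → ℝ)) (hW : W = {x | (∀ i, 0 ≤ x i) ∧ StrictMono x})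
    (Δ : (Fin n → ℝ) → ℝ)
    (hΔ : ∀ x, Δ x = ∏ i : Fin n, ∏ j ∈ Finset.Ioi i, (x j - x i))
    (H : (Fin n → ℝ) → ℝ) (hHmeas : Measurable H) (hH0 : ∀ x, 0 ≤ H x)
    (hHmono : ∀ x ∈ W, ∀ y ∈ W, (∀ i, x i ≤ y i) → H x ≤ H y)
    (hnorm1 : ∫ x in W, (Δ x) ^ 2 ∂(Measure.pi fun _ : Fin n => μ) = 1)
    (hnorm2 : ∫ x in W, (Δ x) ^ 2 * H x ∂(Measure.pi fun _ : Fin n => μ) = 1)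
    (𝒜 : Set (Fin n → ℝ)) (h𝒜m : MeasurableSet 𝒜) (h𝒜W : 𝒜 ⊆ W)
    (h𝒜inc : ∀ x ∈ 𝒜, ∀ y ∈ W, (∀ i, x i ≤ y i) → y ∈ 𝒜) :
    ∫ x in 𝒜, (Δ x) ^ 2 ∂(Measure.pi fun _ : Fin n => μ)
      ≤ ∫ x in 𝒜, (Δ x) ^ 2 * H x ∂(Measure.pi fun _ : Fin n => μ) :=
  stmt_15_general μ n W hW Δ hΔ H hHmeas hH0 hHmono hnorm1 hnorm2 𝒜 h𝒜m h𝒜W h𝒜inc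
end

section
/- For integers n ≥ 2 and 0 ≤ k ≤ n−2 and every real t ≥ 0, the following inequality between normalized integrals holds: [∫_{[0,t]^{n-k-1}} ∏_{1≤i<j≤n-k-1} (λ_i − λ_j)² · ∏_{i=1}^{n-k-1} λ_i^{2k+2} e^{−λ_i} dλ] / [∫_{[0,∞)^{n-k-1}} ∏_{1≤i<j≤n-k-1} (λ_i − λ_j)² · ∏_{i=1}^{n-k-1} λ_i^{2k+2} e^{−λ_i} dλ] ≥ [∫_{[0,t]^{n-k}} ∏_{1≤i<j≤n-k} (λ_i − λ_j)² · ∏_{i=1}^{n-k} λ_i^{2k} e^{−λ_i} dλ] / [∫_{[0,∞)^{n-k}} ∏_{1≤i<j≤n-k} (λ_i − λ_j)² · ∏_{i=1}^{n-k} λ_i^{2k} e^{−λ_i} dλ]. -/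
/-!
By Andreief's identity, `wishartInt m p D` is `m!` times the Gram determinant of
`1, x, …, x^(m-1)` in `L²(D, x^p e^{-x} dx)`. For `m = M + 1`, replacing `1` by the polynomial
`P_D ∈ 1 + span {x, …, x^M}` orthogonal to `x, …, x^M` leaves the Vandermonde determinant
unchanged and makes the Gram matrix block diagonal; the remaining block, the Gram matrix of
`x · x^j`, is the one of `x^j` for the weight `x^(p+2) e^{-x}`. Hence
`wishartInt (M+1) p D / wishartInt M (p+2) D = (M+1) ‖P_D‖²_D`, and `‖P_D‖²_D` is the minimum
of `‖Q‖²_D` over `Q ∈ 1 + span {x, …, x^M}` (the Christoffel function at `0`). That minimum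
grows with `D`, so the ratio for `[0, t]` is at most the one for `[0, ∞)`, which rearranges to
the claim.
-/

open MeasureTheory

/-- The (unnormalized) Wishart-type integral: `m` eigenvalues in `D`, squared Vandermonde,
weight `λ^p e^{-λ}`. -/
noncomputable def wishartInt (m p : ℕ) (D : Set ℝ) : ℝ :=
  ∫ x in Set.univ.pi (fun _ : Fin m => D),
    ((∏ i : Fin m, ∏ j ∈ Finset.Ioi i, (x i - x j) ^ 2) *
      ∏ i : Fin m, ((x i) ^ p * Real.exp (-(x i))))
    ∂(Measure.pi fun _ : Fin m => volume)

open Matrix Polynomial Set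
open LinearMap (BilinForm)

namespace LinearMap.BilinForm

section Field

variable {K V : Type*} [Field K] [AddCommGroup V] [Module K V]

theorem nondegenerate_restrict_of_anisotropic (B : BilinForm K V) (hB : B.IsRefl)
    (hB₀ : ∀ v, B v v = 0 → v = 0) (W : Submodule K V) : (B.restrict W).Nondegenerate :=
  B.nondegenerate_restrict_of_disjoint_orthogonal hB <|
    Submodule.disjoint_def.2 fun v hv hv' => hB₀ v (hv' v hv)

theorem exists_sub_mem_orthogonal (B : BilinForm K V) (hB : B.IsRefl) {W : Submodule K V}
    [FiniteDimensional K W] (hW : (B.restrict W).Nondegenerate) (u : V) :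
    ∃ w ∈ W, u - w ∈ B.orthogonal W := by
  set w := ((B.restrict W).toDual hW).symm ((B u).domRestrict W)
  refine ⟨w, w.2, fun n hn => hB _ _ ?_⟩
  have hw : B w n = B u n := apply_toDual_symm_apply (hB := hW) _ ⟨n, hn⟩
  rw [map_sub₂, hw, sub_self]

end Field

theorem apply_self_le_of_sub_mem {R M : Type*} [CommRing R] [PartialOrder R]
    [IsOrderedAddMonoid R] [AddCommGroup M] [Module R M] {B : BilinForm R M} (hB : B.IsSymm)
    (hB₀ : ∀ v, 0 ≤ B v v) {W : Submodule R M} {P Q : M} (hP : P ∈ B.orthogonal W)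
    (hQ : Q - P ∈ W) : B P P ≤ B Q Q := by
  have hdP : B (Q - P) P = 0 := hP _ hQ
  have hPd : B P (Q - P) = 0 := (hB.eq _ _).trans hdP
  calc B P P ≤ B P P + B (Q - P) (Q - P) := le_add_of_nonneg_right (hB₀ _)
    _ = B (P + (Q - P)) (P + (Q - P)) := by
        simp only [map_add, LinearMap.add_apply, hdP, hPd, add_zero, zero_add]
    _ = B Q Q := by rw [add_sub_cancel]

end LinearMap.BilinForm

open Equiv in
theorem integral_det_mul_det {ι α : Type*} [Fintype ι] [DecidableEq ι] [MeasurableSpace α]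
    (μ : Measure α) [SigmaFinite μ] (φ ψ : ι → α → ℝ)
    (h : ∀ i j, Integrable (fun a => φ i a * ψ j a) μ) :
    ∫ x : ι → α, (of fun i j => φ i (x j)).det * (of fun i j => ψ i (x j)).det
        ∂(Measure.pi fun _ => μ)
      = (Fintype.card ι).factorial * (of fun i j => ∫ a, φ i a * ψ j a ∂μ).det := by
  set G : Matrix ι ι ℝ := of fun i j => ∫ a, φ i a * ψ j a ∂μ
  have hexpand : ∀ x : ι → α, (of fun i j => φ i (x j)).det * (of fun i j => ψ i (x j)).det
      = ∑ σ : Perm ι, ∑ τ : Perm ι, ((Perm.sign σ : ℝ) * Perm.sign τ) *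
          ∏ i, (φ (σ i) (x i) * ψ (τ i) (x i)) := fun x => by
    simp only [det_apply', of_apply, Finset.sum_mul_sum, Finset.prod_mul_distrib]
    exact Finset.sum_congr rfl fun σ _ => Finset.sum_congr rfl fun τ _ => by ring
  have hint : ∀ σ τ : Perm ι, Integrable (fun x : ι → α =>
      ((Perm.sign σ : ℝ) * Perm.sign τ) * ∏ i, (φ (σ i) (x i) * ψ (τ i) (x i)))
      (Measure.pi fun _ => μ) := fun σ τ =>
    (Integrable.fintype_prod fun i => h (σ i) (τ i)).const_mul _
  calc _ = ∑ σ : Perm ι, ∑ τ : Perm ι, ((Perm.sign σ : ℝ) * Perm.sign τ) *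
          ∏ i, G (σ i) (τ i) := by
        simp_rw [hexpand]
        rw [integral_finsetSum _ fun σ _ => integrable_finsetSum _ fun τ _ => hint σ τ]
        refine Finset.sum_congr rfl fun σ _ => ?_
        rw [integral_finsetSum _ fun τ _ => hint σ τ]
        refine Finset.sum_congr rfl fun τ _ => ?_
        rw [integral_const_mul, integral_fintype_prod_eq_prod
          (fun i a => φ (σ i) a * ψ (τ i) a)]
        rfl
    _ = ∑ σ : Perm ι, (Perm.sign σ : ℝ) * (G.submatrix σ id).det := by
        refine Finset.sum_congr rfl fun σ _ => ?_
        rw [← det_transpose, det_apply', Finset.mul_sum]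
        exact Finset.sum_congr rfl fun τ _ => by simp [mul_assoc]
    _ = ∑ _σ : Perm ι, G.det := by
        refine Finset.sum_congr rfl fun σ _ => ?_
        rw [det_permute, ← mul_assoc, ← Int.cast_mul, ← Units.val_mul, Int.units_mul_self]
        simp
    _ = _ := by simp [Fintype.card_perm]

noncomputable def laguerreWeight (p : ℕ) (x : ℝ) : ℝ := x ^ p * Real.exp (-x)

theorem laguerreWeight_nonneg {p : ℕ} {x : ℝ} (hx : 0 ≤ x) : 0 ≤ laguerreWeight p x := by
  unfold laguerreWeight; positivity

theorem laguerreWeight_add (p q : ℕ) (x : ℝ) :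
    laguerreWeight (p + q) x = x ^ q * laguerreWeight p x := by
  rw [laguerreWeight, laguerreWeight, pow_add]; ring

theorem integrableOn_pow_mul_exp_neg_Ici (i : ℕ) :
    IntegrableOn (fun x : ℝ => x ^ i * Real.exp (-x)) (Ici 0) := by
  rw [integrableOn_Ici_iff_integrableOn_Ioi]
  refine (Real.GammaIntegral_convergent (s := i + 1) (by positivity)).congr_fun
    (fun x _ => ?_) measurableSet_Ioi
  simp only [add_sub_cancel_right, Real.rpow_natCast, mul_comm]

theorem integrableOn_eval_mul_laguerreWeight (P : ℝ[X]) (p : ℕ) {D : Set ℝ} (hD : D ⊆ Ici 0) :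
    IntegrableOn (fun x => P.eval x * laguerreWeight p x) D := by
  refine IntegrableOn.mono_set ?_ hD
  have h : ∀ x : ℝ, P.eval x * laguerreWeight p x = ∑ i ∈ Finset.range ((P * X ^ p).natDegree + 1),
      (P * X ^ p).coeff i * (x ^ i * Real.exp (-x)) := fun x => by
    rw [laguerreWeight, ← mul_assoc, ← eval_X_pow (R := ℝ), ← eval_mul, eval_eq_sum_range,
      Finset.sum_mul]
    simp only [mul_assoc]
  simp_rw [h]
  exact integrable_finsetSum _ fun i _ => (integrableOn_pow_mul_exp_neg_Ici i).const_mul _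

theorem integrableOn_eval_mul_eval_mul_laguerreWeight (P Q : ℝ[X]) (p : ℕ) {D : Set ℝ}
    (hD : D ⊆ Ici 0) : IntegrableOn (fun x => P.eval x * Q.eval x * laguerreWeight p x) D := by
  simpa only [eval_mul] using integrableOn_eval_mul_laguerreWeight (P * Q) p hD

noncomputable def laguerreForm (p : ℕ) {D : Set ℝ} (hD : D ⊆ Ici 0) : BilinForm ℝ ℝ[X] :=
  LinearMap.mk₂ ℝ (fun P Q => ∫ x in D, P.eval x * Q.eval x * laguerreWeight p x)
    (fun P₁ P₂ Q => by
      simp only [eval_add, add_mul]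
      exact integral_add (integrableOn_eval_mul_eval_mul_laguerreWeight _ _ p hD)
        (integrableOn_eval_mul_eval_mul_laguerreWeight _ _ p hD))
    (fun c P Q => by simp only [eval_smul, smul_eq_mul, mul_assoc, integral_const_mul])
    (fun P Q₁ Q₂ => by
      simp only [eval_add, mul_add, add_mul]
      exact integral_add (integrableOn_eval_mul_eval_mul_laguerreWeight _ _ p hD)
        (integrableOn_eval_mul_eval_mul_laguerreWeight _ _ p hD))
    (fun c P Q => by
      simp only [eval_smul, smul_eq_mul, mul_left_comm _ c, mul_assoc, integral_const_mul])

section laguerreForm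

variable {p : ℕ} {D : Set ℝ} (hD : D ⊆ Ici 0)

theorem laguerreForm_apply (P Q : ℝ[X]) :
    laguerreForm p hD P Q = ∫ x in D, P.eval x * Q.eval x * laguerreWeight p x := rfl

theorem laguerreForm_isSymm : (laguerreForm p hD).IsSymm :=
  ⟨fun P Q => by simp only [laguerreForm_apply, mul_comm (P.eval _)]⟩

theorem laguerreForm_self_nonneg (hDm : MeasurableSet D) (P : ℝ[X]) :
    0 ≤ laguerreForm p hD P P :=
  setIntegral_nonneg hDm fun _ hx =>
    mul_nonneg (mul_self_nonneg _) (laguerreWeight_nonneg (hD hx))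

theorem laguerreForm_self_pos (hDm : MeasurableSet D) (hvol : volume D ≠ 0) {P : ℝ[X]}
    (hP : P ≠ 0) : 0 < laguerreForm p hD P P := by
  rw [laguerreForm_apply, setIntegral_pos_iff_support_of_nonneg_ae
    (ae_restrict_of_forall_mem hDm fun x hx =>
      mul_nonneg (mul_self_nonneg _) (laguerreWeight_nonneg (hD hx)))
    (integrableOn_eval_mul_eval_mul_laguerreWeight P P p hD)]
  have hnull : volume ({x | P.IsRoot x} ∪ {0}) = 0 :=
    ((Polynomial.finite_setOfPred_isRoot hP).union (finite_singleton 0)).measure_zero _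
  have hsub : D \ ({x | P.IsRoot x} ∪ {0})
      ⊆ Function.support (fun x => P.eval x * P.eval x * laguerreWeight p x) ∩ D := by
    rintro x ⟨hxD, hx⟩
    simp only [mem_union, mem_ofPred_eq, mem_singleton_iff, not_or, IsRoot.def] at hx
    have hx0 : 0 < x := lt_of_le_of_ne (hD hxD) (Ne.symm hx.2)
    have hPx : P.eval x ≠ 0 := hx.1
    refine ⟨?_, hxD⟩
    simp only [Function.mem_support, laguerreWeight]
    positivity
  calc (0 : ENNReal) < volume D := pos_iff_ne_zero.2 hvol
    _ = volume (D \ ({x | P.IsRoot x} ∪ {0})) := (measure_sdiff_null hnull).symm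
    _ ≤ _ := measure_mono hsub

theorem laguerreForm_self_mono {D' : Set ℝ} (hDD' : D ⊆ D') (hD' : D' ⊆ Ici 0)
    (hD'm : MeasurableSet D') (P : ℝ[X]) :
    laguerreForm p (hDD'.trans hD') P P ≤ laguerreForm p hD' P P :=
  setIntegral_mono_set (integrableOn_eval_mul_eval_mul_laguerreWeight P P p hD')
    (ae_restrict_of_forall_mem hD'm fun _ hx =>
      mul_nonneg (mul_self_nonneg _) (laguerreWeight_nonneg (hD' hx)))
    hDD'.eventuallyLE

end laguerreForm

-- `span {X, X², …, X^M}`, the polynomials of degree `≤ M` vanishing at `0`.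
noncomputable def monomialSpan (M : ℕ) : Submodule ℝ ℝ[X] :=
  Submodule.span ℝ (range fun j : Fin M => (X : ℝ[X]) ^ (j + 1 : ℕ))

instance (M : ℕ) : FiniteDimensional ℝ (monomialSpan M) :=
  FiniteDimensional.span_of_finite ℝ (finite_range _)

theorem coeff_zero_eq_zero_of_mem_monomialSpan {M : ℕ} {R : ℝ[X]} (hR : R ∈ monomialSpan M) :
    R.coeff 0 = 0 := by
  have : monomialSpan M ≤ LinearMap.ker (lcoeff ℝ 0) :=
    Submodule.span_le.2 (range_subset_iff.2 fun j => by simp [coeff_X_pow])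
  exact this hR

theorem exists_mem_orthogonal_laguerreForm (M p : ℕ) {D : Set ℝ} (hD : D ⊆ Ici 0)
    (hDm : MeasurableSet D) (hvol : volume D ≠ 0) :
    ∃ P : ℝ[X], P - 1 ∈ monomialSpan M ∧ P ∈ (laguerreForm p hD).orthogonal (monomialSpan M) := by
  have hrefl := (laguerreForm_isSymm (p := p) hD).isRefl
  have hnd := (laguerreForm p hD).nondegenerate_restrict_of_anisotropic hrefl
    (fun P hP => by_contra fun h => (laguerreForm_self_pos hD hDm hvol h).ne' hP) (monomialSpan M)
  obtain ⟨w, hw, horth⟩ := (laguerreForm p hD).exists_sub_mem_orthogonal hrefl hnd 1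
  exact ⟨1 - w, by simpa using (monomialSpan M).neg_mem hw, horth⟩

theorem det_vandermonde_sq {R : Type*} [CommRing R] {n : ℕ} (x : Fin n → R) :
    (vandermonde x).det ^ 2 = ∏ i, ∏ j ∈ Finset.Ioi i, (x i - x j) ^ 2 := by
  rw [det_vandermonde, ← Finset.prod_pow]
  exact Finset.prod_congr rfl fun i _ => by
    rw [← Finset.prod_pow]
    exact Finset.prod_congr rfl fun j _ => by ring

theorem det_eq_mul_det_submatrix_succ {R : Type*} [CommRing R] {n : ℕ}
    (A : Matrix (Fin (n + 1)) (Fin (n + 1)) R) (h : ∀ i : Fin n, A i.succ 0 = 0) :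
    A.det = A 0 0 * (A.submatrix Fin.succ Fin.succ).det := by
  rw [det_succ_column_zero, Fin.sum_univ_succ]
  simp [h]

theorem wishartInt_eq_integral (m p : ℕ) (D : Set ℝ) :
    wishartInt m p D = ∫ x : Fin m → ℝ, (vandermonde x).det ^ 2 * ∏ i, laguerreWeight p (x i)
      ∂(Measure.pi fun _ => volume.restrict D) := by
  simp_rw [wishartInt, Measure.restrict_pi_pi, det_vandermonde_sq]
  rfl

theorem wishartInt_add_eq_factorial_mul_det {m p q : ℕ} {D : Set ℝ} (hD : D ⊆ Ici 0)
    (v : Fin m → ℝ[X]) (hv : ∀ x : Fin m → ℝ,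
      (of fun i j => (v i).eval (x j)).det ^ 2 = (∏ j, x j ^ q) * (vandermonde x).det ^ 2) :
    wishartInt m (p + q) D = m.factorial * (of fun i j => laguerreForm p hD (v i) (v j)).det := by
  have hint : ∀ i j, Integrable (fun x => (v i).eval x * ((v j).eval x * laguerreWeight p x))
      (volume.restrict D) := fun i j => by
    simpa only [mul_assoc, IntegrableOn] using
      integrableOn_eval_mul_eval_mul_laguerreWeight (v i) (v j) p hD
  have h := integral_det_mul_det (volume.restrict D) (fun i x => (v i).eval x)
    (fun i x => (v i).eval x * laguerreWeight p x) hint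
  rw [Fintype.card_fin] at h
  simp only [laguerreForm_apply, mul_assoc]
  rw [← h, wishartInt_eq_integral]
  refine integral_congr_ae (ae_of_all _ fun x => ?_)
  have hψ : (of fun i j => (v i).eval (x j) * laguerreWeight p (x j))
      = of fun i j => laguerreWeight p (x j) * (of fun i j => (v i).eval (x j)) i j := by
    ext i j; simp [mul_comm]
  simp only [hψ, det_mul_row, laguerreWeight_add]
  rw [Finset.prod_mul_distrib]
  linear_combination (∏ i, laguerreWeight p (x i)) * (hv x).symm

theorem wishartInt_add_two_eq (M p : ℕ) {D : Set ℝ} (hD : D ⊆ Ici 0) :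
    wishartInt M (p + 2) D = M.factorial *
      (of fun i j : Fin M => laguerreForm p hD (X ^ (i + 1 : ℕ)) (X ^ (j + 1 : ℕ))).det :=
  wishartInt_add_eq_factorial_mul_det hD _ fun x => by
    have h : (of fun i j : Fin M => ((X : ℝ[X]) ^ (i + 1 : ℕ)).eval (x j))
        = of fun i j => x j * (vandermonde x)ᵀ i j := by
      ext i j; simp [vandermonde, pow_succ, mul_comm]
    rw [h, det_mul_row, det_transpose, mul_pow, Finset.prod_pow]

theorem det_eval_cons_eq_det_vandermonde {M : ℕ} {P : ℝ[X]} (hP : P - 1 ∈ monomialSpan M)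
    (x : Fin (M + 1) → ℝ) :
    (of fun i j =>
      ((Fin.cons P fun j : Fin M => X ^ (j + 1 : ℕ) : Fin (M + 1) → ℝ[X]) i).eval (x j)).det
      = (vandermonde x).det := by
  obtain ⟨c, hc⟩ := (Submodule.mem_span_range_iff_exists_fun ℝ).1 hP
  rw [eq_sub_iff_add_eq'] at hc
  have h : (of fun i j =>
      ((Fin.cons P fun j : Fin M => X ^ (j + 1 : ℕ) : Fin (M + 1) → ℝ[X]) i).eval (x j))
      = (vandermonde x)ᵀ.updateRow 0
          (∑ k, (Fin.cons 1 c : Fin (M + 1) → ℝ) k • (vandermonde x)ᵀ k) := by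
    ext i j
    refine Fin.cases ?_ (fun i => ?_) i
    · simp [← hc, Fin.sum_univ_succ, eval_finsetSum, vandermonde]
    · simp [vandermonde]
  rw [h, det_updateRow_sum, Fin.cons_zero, one_smul, det_transpose]

theorem wishartInt_succ_eq {M p : ℕ} {D : Set ℝ} (hD : D ⊆ Ici 0) {P : ℝ[X]}
    (hP1 : P - 1 ∈ monomialSpan M) (hP : P ∈ (laguerreForm p hD).orthogonal (monomialSpan M)) :
    wishartInt (M + 1) p D = (M + 1) * laguerreForm p hD P P * wishartInt M (p + 2) D := by
  set v : Fin (M + 1) → ℝ[X] := Fin.cons P fun j : Fin M => X ^ (j + 1 : ℕ)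
  have hN := wishartInt_add_eq_factorial_mul_det (p := p) (q := 0) hD v fun x => by
    rw [det_eval_cons_eq_det_vandermonde hP1]; simp
  have hsub : (of fun i j => laguerreForm p hD (v i) (v j)).submatrix Fin.succ Fin.succ
      = of fun i j : Fin M => laguerreForm p hD (X ^ (i + 1 : ℕ)) (X ^ (j + 1 : ℕ)) := by
    ext i j; simp [v]
  rw [add_zero] at hN
  rw [hN, det_eq_mul_det_submatrix_succ _ fun i => hP _ (Submodule.subset_span (mem_range_self i)),
    hsub, wishartInt_add_two_eq M p hD, Nat.factorial_succ]
  simp only [of_apply, v, Fin.cons_zero]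
  push_cast
  ring

theorem wishartInt_zero (p : ℕ) (D : Set ℝ) : wishartInt 0 p D = 1 := by
  rw [wishartInt_eq_integral, Measure.pi_of_empty]
  simp

theorem wishartInt_pos {D : Set ℝ} (hD : D ⊆ Ici 0) (hDm : MeasurableSet D)
    (hvol : volume D ≠ 0) : ∀ m p : ℕ, 0 < wishartInt m p D
  | 0, p => by rw [wishartInt_zero]; exact one_pos
  | M + 1, p => by
    obtain ⟨P, hP1, hP⟩ := exists_mem_orthogonal_laguerreForm M p hD hDm hvol
    have hP0 : P ≠ 0 := by
      rintro rfl
      simpa using coeff_zero_eq_zero_of_mem_monomialSpan hP1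
    have hPP := laguerreForm_self_pos (p := p) hD hDm hvol hP0
    have hM := wishartInt_pos hD hDm hvol M (p + 2)
    rw [wishartInt_succ_eq hD hP1 hP]
    positivity

theorem wishartInt_nonneg (m p : ℕ) {D : Set ℝ} (hD : D ⊆ Ici 0) (hDm : MeasurableSet D) :
    0 ≤ wishartInt m p D :=
  setIntegral_nonneg (MeasurableSet.univ_pi fun _ => hDm) fun _ hx =>
    mul_nonneg (Finset.prod_nonneg fun _ _ => Finset.prod_nonneg fun _ _ => sq_nonneg _)
      (Finset.prod_nonneg fun i _ => laguerreWeight_nonneg (hD (hx i trivial)))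

theorem wishartInt_succ_eq_zero_of_volume_eq_zero (m p : ℕ) {D : Set ℝ} (hvol : volume D = 0) :
    wishartInt (m + 1) p D = 0 := by
  rw [wishartInt, Measure.restrict_eq_zero.2, integral_zero_measure]
  simp [Measure.pi_pi, hvol]

theorem wishartInt_succ_div_le_of_subset {M p : ℕ} {D D' : Set ℝ} (hDD' : D ⊆ D') (hD' : D' ⊆ Ici 0)
    (hDm : MeasurableSet D) (hD'm : MeasurableSet D') (hvol : volume D ≠ 0) :
    wishartInt (M + 1) p D / wishartInt M (p + 2) D
      ≤ wishartInt (M + 1) p D' / wishartInt M (p + 2) D' := by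
  have hD := hDD'.trans hD'
  have hvol' : volume D' ≠ 0 := fun h => hvol (measure_mono_null hDD' h)
  obtain ⟨P, hP1, hP⟩ := exists_mem_orthogonal_laguerreForm M p hD hDm hvol
  obtain ⟨Q, hQ1, hQ⟩ := exists_mem_orthogonal_laguerreForm M p hD' hD'm hvol'
  rw [wishartInt_succ_eq hD hP1 hP, wishartInt_succ_eq hD' hQ1 hQ,
    mul_div_cancel_right₀ _ (wishartInt_pos hD hDm hvol M (p + 2)).ne',
    mul_div_cancel_right₀ _ (wishartInt_pos hD' hD'm hvol' M (p + 2)).ne']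
  gcongr
  calc laguerreForm p hD P P ≤ laguerreForm p hD Q Q :=
        LinearMap.BilinForm.apply_self_le_of_sub_mem (laguerreForm_isSymm hD)
          (laguerreForm_self_nonneg hD hDm) hP (by simpa using sub_mem hQ1 hP1)
    _ ≤ laguerreForm p hD' Q Q := laguerreForm_self_mono hDD' hD' hD'm Q

theorem stmt_16_general (n k : ℕ) (t : ℝ) :
    wishartInt (n - k) (2 * k) (Set.Icc 0 t) / wishartInt (n - k) (2 * k) (Set.Ici 0)
      ≤ wishartInt (n - k - 1) (2 * k + 2) (Set.Icc 0 t)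
          / wishartInt (n - k - 1) (2 * k + 2) (Set.Ici 0) := by
  rcases eq_or_ne (n - k) 0 with hnk | hnk
  · simp [hnk, wishartInt_zero]
  obtain ⟨M, hM⟩ := Nat.exists_eq_add_one_of_ne_zero hnk
  rw [hM, Nat.add_sub_cancel]
  have hIci := wishartInt_pos subset_rfl measurableSet_Ici (by simp)
  rw [div_le_div_iff₀ (hIci _ _) (hIci _ _)]
  rcases eq_or_ne (volume (Icc 0 t)) 0 with h0 | h0
  · rw [wishartInt_succ_eq_zero_of_volume_eq_zero _ _ h0, zero_mul]
    exact mul_nonneg (wishartInt_nonneg _ _ Icc_subset_Ici_self measurableSet_Icc) (hIci _ _).le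
  · have h := wishartInt_succ_div_le_of_subset (M := M) (p := 2 * k) Icc_subset_Ici_self subset_rfl
      measurableSet_Icc measurableSet_Ici h0
    rw [div_le_div_iff₀ (wishartInt_pos Icc_subset_Ici_self measurableSet_Icc h0 _ _)
      (hIci _ _)] at h
    linarith

theorem stmt_16 (n k : ℕ) (hn : 2 ≤ n) (hk : k ≤ n - 2) (t : ℝ) (ht : 0 ≤ t) :
    wishartInt (n - k) (2 * k) (Set.Icc 0 t) / wishartInt (n - k) (2 * k) (Set.Ici 0)
      ≤ wishartInt (n - k - 1) (2 * k + 2) (Set.Icc 0 t)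
          / wishartInt (n - k - 1) (2 * k + 2) (Set.Ici 0) :=
  stmt_16_general n k t
end
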